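/- arXiv:2112.06201 — 5 statements merged into one kernel-verified Lean document; each statement's English description precedes it below -/
import Mathlib

section
/- Let a < b be real numbers, h = b − a, and let w ∈ C¹([a,b]). Then for each s ∈ {a, b}, |w(s)|² ≤ 2( h^{−1} ∫_a^b w(x)² dx + (∫_a^b w(x)² dx)^{1/2} (∫_a^b w′(x)² dx)^{1/2} ). -/
/-!
By the mean value theorem for integrals, `w c ^ 2` equals the average of `w ^ 2` over `[a, b]` for
some `c ∈ (a, b)`. For any `s ∈ [a, b]` the fundamental theorem of calculus gives
`w s ^ 2 = w c ^ 2 + ∫ x in c..s, 2 * w x * w' x`, and Cauchy–Schwarz bounds the last integral by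
`2 ‖w‖₂ ‖w'‖₂`.
-/

open MeasureTheory Set intervalIntegral
open scoped Interval

theorem integral_abs_mul_abs_le_sqrt_mul_sqrt {α : Type*} [MeasurableSpace α] {μ : Measure α}
    {f g : α → ℝ} (hf : MemLp f 2 μ) (hg : MemLp g 2 μ) :
    ∫ x, |f x| * |g x| ∂μ ≤ √(∫ x, f x ^ 2 ∂μ) * √(∫ x, g x ^ 2 ∂μ) := by
  have h := integral_mul_le_Lp_mul_Lq_of_nonneg Real.HolderConjugate.two_two
    (ae_of_all _ fun x => abs_nonneg (f x)) (ae_of_all _ fun x => abs_nonneg (g x))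
    (by simpa using hf.norm) (by simpa using hg.norm)
  simpa only [Real.rpow_two, sq_abs, Real.sqrt_eq_rpow] using h

theorem ContinuousOn.memLp_two_restrict_Ioc {f : ℝ → ℝ} {a b : ℝ}
    (hf : ContinuousOn f (Icc a b)) : MemLp f 2 (volume.restrict (Ioc a b)) :=
  (memLp_two_iff_integrable_sq
    ((hf.mono Ioc_subset_Icc_self).aestronglyMeasurable measurableSet_Ioc)).2
    ((hf.pow 2).integrableOn_Icc.mono_set Ioc_subset_Icc_self)

namespace intervalIntegral

theorem integral_abs_mul_abs_le_sqrt_mul_sqrt {f g : ℝ → ℝ} {a b : ℝ} (hab : a ≤ b)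
    (hf : ContinuousOn f (Icc a b)) (hg : ContinuousOn g (Icc a b)) :
    ∫ x in a..b, |f x| * |g x| ≤ √(∫ x in a..b, f x ^ 2) * √(∫ x in a..b, g x ^ 2) := by
  simp only [integral_of_le hab]
  exact _root_.integral_abs_mul_abs_le_sqrt_mul_sqrt hf.memLp_two_restrict_Ioc
    hg.memLp_two_restrict_Ioc

variable {E : Type*} [NormedAddCommGroup E] [NormedSpace ℝ E]

theorem norm_integral_le_integral_norm_of_mem_Icc {f : ℝ → E} {a b c d : ℝ}
    (hc : c ∈ Icc a b) (hd : d ∈ Icc a b) (hf : IntervalIntegrable f volume a b) :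
    ‖∫ x in c..d, f x‖ ≤ ∫ x in a..b, ‖f x‖ := by
  have hab : a ≤ b := hc.1.trans hc.2
  have hsub : Ι c d ⊆ Ioc a b := Ioc_subset_Ioc (le_min hc.1 hd.1) (max_le hc.2 hd.2)
  calc ‖∫ x in c..d, f x‖ ≤ ∫ x in Ι c d, ‖f x‖ := norm_integral_le_integral_norm_uIoc
    _ ≤ ∫ x in Ioc a b, ‖f x‖ :=
      setIntegral_mono_set hf.1.norm (ae_of_all _ fun _ => norm_nonneg _) hsub.eventuallyLE
    _ = ∫ x in a..b, ‖f x‖ := (integral_of_le hab).symm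

theorem integral_eq_sub_of_hasDerivWithinAt_uIcc [CompleteSpace E] {f f' : ℝ → E} {a b : ℝ}
    (hderiv : ∀ x ∈ uIcc a b, HasDerivWithinAt f (f' x) (uIcc a b) x)
    (hint : IntervalIntegrable f' volume a b) : ∫ x in a..b, f' x = f b - f a :=
  integral_eq_sub_of_hasDeriv_right (fun x hx => (hderiv x hx).continuousWithinAt)
    (fun x hx => ((hderiv x (Ioo_subset_Icc_self hx)).hasDerivAt
      (Icc_mem_nhds hx.1 hx.2)).hasDerivWithinAt) hint

end intervalIntegral

section TraceInequality

variable {a b : ℝ} {w w' : ℝ → ℝ}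

theorem sq_sub_sq_eq_integral_two_mul_mul_deriv
    (hw : ∀ x ∈ Icc a b, HasDerivWithinAt w (w' x) (Icc a b) x) (hw' : ContinuousOn w' (Icc a b))
    {c s : ℝ} (hc : c ∈ Icc a b) (hs : s ∈ Icc a b) :
    w s ^ 2 - w c ^ 2 = ∫ x in c..s, 2 * (w x * w' x) := by
  have hsub : uIcc c s ⊆ Icc a b := uIcc_subset_Icc hc hs
  have hwc : ContinuousOn w (Icc a b) := fun x hx => (hw x hx).continuousWithinAt
  refine (integral_eq_sub_of_hasDerivWithinAt_uIcc (f := fun x => w x ^ 2)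
    (fun x hx => ?_) ?_).symm
  · exact (((hw x (hsub hx)).mono hsub).fun_pow 2).congr_deriv (by norm_num; ring)
  · exact (continuousOn_const.mul (hwc.mul hw')).mono hsub |>.intervalIntegrable

theorem sq_le_average_sq_add_two_mul_sqrt_mul_sqrt (hab : a < b)
    (hw : ∀ x ∈ Icc a b, HasDerivWithinAt w (w' x) (Icc a b) x) (hw' : ContinuousOn w' (Icc a b))
    {s : ℝ} (hs : s ∈ Icc a b) :
    w s ^ 2 ≤ (b - a)⁻¹ * (∫ x in a..b, w x ^ 2)
      + 2 * (√(∫ x in a..b, w x ^ 2) * √(∫ x in a..b, w' x ^ 2)) := by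
  have hwc : ContinuousOn w (Icc a b) := fun x hx => (hw x hx).continuousWithinAt
  obtain ⟨c, hc, hc_avg⟩ := exists_eq_interval_average hab.ne
    (f := fun x => w x ^ 2) (by simpa only [uIcc_of_le hab.le] using hwc.fun_pow 2)
  have hc : c ∈ Icc a b := Ioo_subset_Icc_self (by rwa [uIoo_of_le hab.le] at hc)
  rw [interval_average_eq, smul_eq_mul] at hc_avg
  have hint : IntervalIntegrable (fun x => 2 * (w x * w' x)) volume a b :=
    (continuousOn_const.mul (hwc.mul hw')).intervalIntegrable_of_Icc hab.le
  have htail : ∫ x in c..s, 2 * (w x * w' x) ≤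
      2 * (√(∫ x in a..b, w x ^ 2) * √(∫ x in a..b, w' x ^ 2)) :=
    calc ∫ x in c..s, 2 * (w x * w' x)
        ≤ ∫ x in a..b, |2 * (w x * w' x)| :=
          (le_abs_self _).trans (norm_integral_le_integral_norm_of_mem_Icc hc hs hint)
      _ = 2 * ∫ x in a..b, |w x| * |w' x| := by
          simp only [abs_mul, abs_two, intervalIntegral.integral_const_mul]
      _ ≤ 2 * (√(∫ x in a..b, w x ^ 2) * √(∫ x in a..b, w' x ^ 2)) := by
          gcongr
          exact integral_abs_mul_abs_le_sqrt_mul_sqrt hab.le hwc hw'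
  linarith [sq_sub_sq_eq_integral_two_mul_mul_deriv hw hw' hc hs]

end TraceInequality

/-- Multiplicative trace inequality on an interval: for `w ∈ C¹([a,b])` and `s ∈ {a, b}`,
`|w(s)|² ≤ 2 (h⁻¹ ∫ w² + (∫ w²)^{1/2} (∫ w′²)^{1/2})` where `h = b − a`. -/
theorem statement1 (a b : ℝ) (hab : a < b) (w w' : ℝ → ℝ)
    (hw : ∀ x ∈ Set.Icc a b, HasDerivWithinAt w (w' x) (Set.Icc a b) x)
    (hw' : ContinuousOn w' (Set.Icc a b)) :
    ∀ s ∈ ({a, b} : Set ℝ),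
      |w s| ^ 2 ≤
        2 * ((b - a)⁻¹ * (∫ x in a..b, (w x) ^ 2)
          + Real.sqrt (∫ x in a..b, (w x) ^ 2) * Real.sqrt (∫ x in a..b, (w' x) ^ 2)) := by
  intro s hs_endpoint
  have hs : s ∈ Icc a b := by
    rcases hs_endpoint with rfl | rfl
    exacts [left_mem_Icc.2 hab.le, right_mem_Icc.2 hab.le]
  have hmean_nonneg : 0 ≤ (b - a)⁻¹ * ∫ x in a..b, w x ^ 2 :=
    mul_nonneg (inv_nonneg.2 (sub_pos.2 hab).le)
      (integral_nonneg hab.le fun x _ => sq_nonneg (w x))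
  rw [sq_abs]
  linarith [sq_le_average_sq_add_two_mul_sqrt_mul_sqrt hab hw hw' hs]
end

section
/- Let 0 = x_0 < x_1 < ⋯ < x_N = 1 be a partition of [0,1], let ε > 0, let a ∈ C¹([0,1]) with a(x) ≥ β > 0, let b be continuous with b(x) − a′(x)/2 ≥ γ > 0 on [0,1], and let ρ(x_i) ≥ 0 for 0 ≤ i ≤ N. Then for every v ∈ V_N^k one has B(v, v) ≥ ‖v‖²_{NIPG}. -/
open Set Finset

/-- The jump `[w(x_i)]` of a broken function at node `x_i`, where `w i` is the
(smooth) representative of the broken function on the element `I_i = [x_{i−1}, x_i]`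
(elements indexed `1, …, N`).  Conventions: `[w(x_0)] = −w(x_0^+)`, `[w(x_N)] = w(x_N^−)`,
and `[w(x_i)] = w(x_i^−) − w(x_i^+)` for interior nodes. -/
noncomputable def brokenJump (N : ℕ) (x : ℕ → ℝ) (w : ℕ → ℝ → ℝ) (i : ℕ) : ℝ :=
  if i = 0 then -(w 1 (x 0))
  else if i = N then w N (x N)
  else w i (x i) - w (i + 1) (x i)

/-- The average `{w(x_i)}` of a broken function at node `x_i`.  Conventions:
`{w(x_0)} = w(x_0^+)`, `{w(x_N)} = w(x_N^−)`, and
`{w(x_i)} = (w(x_i^+) + w(x_i^−))/2` for interior nodes. -/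
noncomputable def brokenAvg (N : ℕ) (x : ℕ → ℝ) (w : ℕ → ℝ → ℝ) (i : ℕ) : ℝ :=
  if i = 0 then w 1 (x 0)
  else if i = N then w N (x N)
  else (w (i + 1) (x i) + w i (x i)) / 2

/-- The NIPG bilinear form `B(u, v)`; `u, v` are broken functions given by their
elementwise representatives `u i, v i` on `I_i = [x_{i−1}, x_i]` together with the
elementwise derivatives `u' i, v' i`. -/
noncomputable def nipgB (N : ℕ) (x : ℕ → ℝ) (ε : ℝ) (a b : ℝ → ℝ) (ρ : ℕ → ℝ)
    (u u' v v' : ℕ → ℝ → ℝ) : ℝ :=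
  (∑ i ∈ Finset.Icc 1 N, ∫ t in (x (i - 1))..(x i), ε * u' i t * v' i t)
  - ε * ∑ i ∈ Finset.Icc 0 N, brokenAvg N x u' i * brokenJump N x v i
  + ε * ∑ i ∈ Finset.Icc 0 N, brokenAvg N x v' i * brokenJump N x u i
  + ∑ i ∈ Finset.Icc 0 N, ρ i * brokenJump N x u i * brokenJump N x v i
  + (∑ i ∈ Finset.Icc 1 N, ∫ t in (x (i - 1))..(x i), a t * u' i t * v i t)
  - (∑ i ∈ Finset.Icc 0 (N - 1), a (x i) * brokenJump N x u i * v (i + 1) (x i))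
  + ∑ i ∈ Finset.Icc 1 N, ∫ t in (x (i - 1))..(x i), b t * u i t * v i t

/-- The square of the NIPG energy norm
`‖v‖²_{NIPG} = ε Σ‖v′‖²_{L²(I_i)} + γ Σ‖v‖²_{L²(I_i)} + Σ ρ(x_i)[v(x_i)]²`. -/
noncomputable def nipgNormSq (N : ℕ) (x : ℕ → ℝ) (ε γ : ℝ) (ρ : ℕ → ℝ)
    (v v' : ℕ → ℝ → ℝ) : ℝ :=
  ε * (∑ i ∈ Finset.Icc 1 N, ∫ t in (x (i - 1))..(x i), (v' i t) ^ 2)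
  + γ * (∑ i ∈ Finset.Icc 1 N, ∫ t in (x (i - 1))..(x i), (v i t) ^ 2)
  + ∑ i ∈ Finset.Icc 0 N, ρ i * (brokenJump N x v i) ^ 2

/-! With `u = v` the two `ε`-flux sums of the NIPG form cancel and the penalty term is
`Σ ρ [v]²`, so only the convection–reaction part needs work. On each element,
`∫ a v' v = [a v² / 2] - ∫ a' v² / 2`, and `b - a'/2 ≥ γ` turns the element integrals into
`γ ∫ v²` plus the boundary values `a v² / 2`. Regrouped by node, these boundary values
together with the upwind terms `-a(x_i) [v(x_i)] v(x_i⁺)` sum to `½ Σ a(x_i) [v(x_i)]²`,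
which is nonnegative because `a > 0`. -/

theorem integral_mul_deriv_mul_self {a a' v v' : ℝ → ℝ} {c d : ℝ} (hcd : c ≤ d)
    (ha : ∀ t ∈ Icc c d, HasDerivWithinAt a (a' t) (Icc c d) t)
    (ha' : ContinuousOn a' (Icc c d)) (hv : ∀ t, HasDerivAt v (v' t) t) (hv' : Continuous v') :
    ∫ t in c..d, a t * v' t * v t
      = a d * v d ^ 2 / 2 - a c * v c ^ 2 / 2 - ∫ t in c..d, a' t * v t ^ 2 / 2 := by
  have hvC : Continuous v := continuous_iff_continuousAt.2 fun t => (hv t).continuousAt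
  have haC : ContinuousOn a (Icc c d) := fun t ht => (ha t ht).continuousWithinAt
  have hderiv : ∀ t ∈ Ioo c d, HasDerivAt (fun t => a t * v t ^ 2 / 2)
      (a' t * v t ^ 2 / 2 + a t * v' t * v t) t := by
    intro t ht
    have haAt := (ha t (Ioo_subset_Icc_self ht)).hasDerivAt (Icc_mem_nhds ht.1 ht.2)
    refine ((haAt.fun_mul ((hv t).fun_pow 2)).div_const 2).congr_deriv ?_
    push_cast
    ring
  have hint : IntervalIntegrable (fun t => a' t * v t ^ 2 / 2) MeasureTheory.volume c d :=
    ((ha'.mul (hvC.pow 2).continuousOn).div_const 2).intervalIntegrable_of_Icc hcd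
  have hint' : IntervalIntegrable (fun t => a t * v' t * v t) MeasureTheory.volume c d :=
    ((haC.mul hv'.continuousOn).mul hvC.continuousOn).intervalIntegrable_of_Icc hcd
  have hFTC := intervalIntegral.integral_eq_sub_of_hasDerivAt_of_le hcd
    ((haC.fun_mul (hvC.fun_pow 2).continuousOn).div_const 2) hderiv (hint.add hint')
  rw [intervalIntegral.integral_add hint hint'] at hFTC
  linarith

theorem le_integral_convection_add_integral_reaction {a a' b v v' : ℝ → ℝ} {c d γ : ℝ}
    (hcd : c ≤ d) (ha : ∀ t ∈ Icc c d, HasDerivWithinAt a (a' t) (Icc c d) t)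
    (ha' : ContinuousOn a' (Icc c d)) (hb : ContinuousOn b (Icc c d))
    (hbγ : ∀ t ∈ Icc c d, γ ≤ b t - a' t / 2)
    (hv : ∀ t, HasDerivAt v (v' t) t) (hv' : Continuous v') :
    a d * v d ^ 2 / 2 - a c * v c ^ 2 / 2 + γ * ∫ t in c..d, v t ^ 2
      ≤ (∫ t in c..d, a t * v' t * v t) + ∫ t in c..d, b t * v t * v t := by
  have hvC : Continuous v := continuous_iff_continuousAt.2 fun t => (hv t).continuousAt
  have hγint : IntervalIntegrable (fun t => γ * v t ^ 2) MeasureTheory.volume c d :=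
    (continuous_const.mul (hvC.pow 2)).intervalIntegrable c d
  have ha'int : IntervalIntegrable (fun t => a' t * v t ^ 2 / 2) MeasureTheory.volume c d :=
    ((ha'.mul (hvC.pow 2).continuousOn).div_const 2).intervalIntegrable_of_Icc hcd
  have hreaction : ∫ t in c..d, γ * v t ^ 2 + a' t * v t ^ 2 / 2
      ≤ ∫ t in c..d, b t * v t * v t := by
    refine intervalIntegral.integral_mono_on hcd (hγint.add ha'int)
      (((hb.mul hvC.continuousOn).mul hvC.continuousOn).intervalIntegrable_of_Icc hcd) ?_
    intro t ht
    nlinarith [hbγ t ht, sq_nonneg (v t)]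
  rw [intervalIntegral.integral_add hγint ha'int, intervalIntegral.integral_const_mul]
    at hreaction
  rw [integral_mul_deriv_mul_self hcd ha ha' hv hv']
  linarith

section brokenJump

variable {N : ℕ} (x : ℕ → ℝ) (w : ℕ → ℝ → ℝ)

theorem brokenJump_zero : brokenJump N x w 0 = -w 1 (x 0) := by
  simp [brokenJump]

theorem brokenJump_self (hN : N ≠ 0) : brokenJump N x w N = w N (x N) := by
  simp [brokenJump, hN]

theorem brokenJump_of_pos_of_lt {i : ℕ} (h0 : 0 < i) (hi : i < N) :
    brokenJump N x w i = w i (x i) - w (i + 1) (x i) := by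
  simp [brokenJump, h0.ne', hi.ne]

end brokenJump

theorem sum_boundary_sub_sum_upwind_eq_sum_jump_sq {N : ℕ} (hN : 1 ≤ N) (x : ℕ → ℝ)
    (α : ℕ → ℝ) (w : ℕ → ℝ → ℝ) :
    ∑ i ∈ Finset.Icc 1 N, (α i * w i (x i) ^ 2 / 2 - α (i - 1) * w i (x (i - 1)) ^ 2 / 2)
      - ∑ i ∈ Finset.Icc 0 (N - 1), α i * brokenJump N x w i * w (i + 1) (x i)
    = ∑ i ∈ Finset.Icc 0 N, α i * brokenJump N x w i ^ 2 / 2 := by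
  obtain ⟨M, rfl⟩ : ∃ M, N = M + 1 := ⟨N - 1, by omega⟩
  have hshift : ∑ i ∈ Finset.Icc 1 (M + 1),
        (α i * w i (x i) ^ 2 / 2 - α (i - 1) * w i (x (i - 1)) ^ 2 / 2)
      = ∑ j ∈ Finset.range (M + 1), (α (j + 1) * w (j + 1) (x (j + 1)) ^ 2 / 2
          - α j * w (j + 1) (x j) ^ 2 / 2) := by
    rw [← Finset.Ico_add_one_right_eq_Icc, Finset.sum_Ico_eq_sum_range]
    refine Finset.sum_congr (by simp) fun j _ => ?_
    rw [add_comm 1 j, Nat.add_sub_cancel]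
  have hinterior : ∀ j ∈ Finset.range M, α (j + 1) * brokenJump (M + 1) x w (j + 1) ^ 2 / 2
      = α (j + 1) * w (j + 1) (x (j + 1)) ^ 2 / 2 - α (j + 1) * w (j + 2) (x (j + 1)) ^ 2 / 2
        - α (j + 1) * brokenJump (M + 1) x w (j + 1) * w (j + 2) (x (j + 1)) := by
    intro j hj
    rw [brokenJump_of_pos_of_lt x w j.succ_pos (by simpa using hj)]
    ring
  rw [hshift, Nat.add_sub_cancel, ← Nat.range_succ_eq_Icc_zero, ← Nat.range_succ_eq_Icc_zero,
    Finset.sum_sub_distrib,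
    Finset.sum_range_succ (fun j => α (j + 1) * w (j + 1) (x (j + 1)) ^ 2 / 2),
    Finset.sum_range_succ' (fun j => α j * w (j + 1) (x j) ^ 2 / 2),
    Finset.sum_range_succ' (fun j => α j * brokenJump (M + 1) x w j * w (j + 1) (x j)),
    Finset.sum_range_succ (fun j => α j * brokenJump (M + 1) x w j ^ 2 / 2),
    Finset.sum_range_succ' (fun j => α j * brokenJump (M + 1) x w j ^ 2 / 2),
    Finset.sum_congr rfl hinterior,
    brokenJump_zero, brokenJump_self x w M.succ_ne_zero]
  simp only [Finset.sum_sub_distrib]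
  ring

theorem statement2_general (N : ℕ) (hN : 1 ≤ N) (x : ℕ → ℝ)
    (hx0 : x 0 = 0) (hxN : x N = 1) (hmono : ∀ i < N, x i < x (i + 1))
    (ε β γ : ℝ) (hβ : 0 < β)
    (a a' b : ℝ → ℝ)
    (ha : ∀ t ∈ Icc (0:ℝ) 1, HasDerivWithinAt a (a' t) (Icc 0 1) t)
    (ha' : ContinuousOn a' (Icc 0 1))
    (haβ : ∀ t ∈ Icc (0:ℝ) 1, β ≤ a t)
    (hb : ContinuousOn b (Icc 0 1))
    (hbγ : ∀ t ∈ Icc (0:ℝ) 1, γ ≤ b t - a' t / 2)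
    (ρ : ℕ → ℝ)
    (p : ℕ → Polynomial ℝ) :
    nipgNormSq N x ε γ ρ
        (fun i t => (p i).eval t) (fun i t => ((p i).derivative).eval t)
      ≤ nipgB N x ε a b ρ
        (fun i t => (p i).eval t) (fun i t => ((p i).derivative).eval t)
        (fun i t => (p i).eval t) (fun i t => ((p i).derivative).eval t) := by
  have hnode : ∀ i ≤ N, x i ∈ Icc (0:ℝ) 1 := by
    intro i hi
    rw [← hx0, ← hxN]
    have hx : MonotoneOn x (Set.Iic N) := (strictMonoOn_Iic_of_lt_succ fun m hm => by
      rw [Order.succ_eq_add_one]; exact hmono m hm).monotoneOn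
    exact ⟨hx (Nat.zero_le N) hi (Nat.zero_le i), hx hi (Set.mem_Iic.2 le_rfl) hi⟩
  have helement : ∀ i ∈ Finset.Icc 1 N,
      a (x i) * (p i).eval (x i) ^ 2 / 2 - a (x (i - 1)) * (p i).eval (x (i - 1)) ^ 2 / 2
        + γ * ∫ t in x (i - 1)..x i, (p i).eval t ^ 2
      ≤ (∫ t in x (i - 1)..x i, a t * (p i).derivative.eval t * (p i).eval t)
        + ∫ t in x (i - 1)..x i, b t * (p i).eval t * (p i).eval t := by
    intro i hi
    rw [Finset.mem_Icc] at hi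
    have hle : x (i - 1) ≤ x i := by
      simpa [Nat.sub_add_cancel hi.1] using (hmono (i - 1) (by omega)).le
    have hsub : Icc (x (i - 1)) (x i) ⊆ Icc 0 1 :=
      Icc_subset_Icc (hnode _ (by omega)).1 (hnode _ hi.2).2
    exact le_integral_convection_add_integral_reaction hle
      (fun t ht => (ha t (hsub ht)).mono hsub) (ha'.mono hsub) (hb.mono hsub)
      (fun t ht => hbγ t (hsub ht)) (p i).hasDerivAt (p i).derivative.continuous
  have hupwind :=
    sum_boundary_sub_sum_upwind_eq_sum_jump_sq hN x (fun i => a (x i)) fun i t => (p i).eval t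
  rw [Finset.sum_sub_distrib] at hupwind
  have hjump : 0 ≤ ∑ i ∈ Finset.Icc 0 N,
      a (x i) * brokenJump N x (fun i t => (p i).eval t) i ^ 2 / 2 := by
    refine Finset.sum_nonneg fun i hi => ?_
    have := hβ.trans_le (haβ _ (hnode i (Finset.mem_Icc.1 hi).2))
    positivity
  have hsum := Finset.sum_le_sum helement
  simp only [Finset.sum_add_distrib, Finset.sum_sub_distrib, ← Finset.mul_sum] at hsum
  simp only [nipgNormSq, nipgB, mul_assoc ε, mul_assoc (ρ _), ← sq,
    intervalIntegral.integral_const_mul, ← Finset.mul_sum]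
  linarith

/-- Coercivity of the NIPG bilinear form: `B(v, v) ≥ ‖v‖²_{NIPG}` for every
`v ∈ V_N^k` (a broken function that is a polynomial of degree at most `k` on each
element of the partition `0 = x_0 < x_1 < ⋯ < x_N = 1`). -/
theorem statement2 (N k : ℕ) (hN : 1 ≤ N) (x : ℕ → ℝ)
    (hx0 : x 0 = 0) (hxN : x N = 1) (hmono : ∀ i < N, x i < x (i + 1))
    (ε β γ : ℝ) (hε : 0 < ε) (hβ : 0 < β) (hγ : 0 < γ)
    (a a' b : ℝ → ℝ)
    (ha : ∀ t ∈ Icc (0:ℝ) 1, HasDerivWithinAt a (a' t) (Icc 0 1) t)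
    (ha' : ContinuousOn a' (Icc 0 1))
    (haβ : ∀ t ∈ Icc (0:ℝ) 1, β ≤ a t)
    (hb : ContinuousOn b (Icc 0 1))
    (hbγ : ∀ t ∈ Icc (0:ℝ) 1, γ ≤ b t - a' t / 2)
    (ρ : ℕ → ℝ) (hρ : ∀ i, 0 ≤ ρ i)
    (p : ℕ → Polynomial ℝ) (hp : ∀ i, (p i).natDegree ≤ k) :
    nipgNormSq N x ε γ ρ
        (fun i t => (p i).eval t) (fun i t => ((p i).derivative).eval t)
      ≤ nipgB N x ε a b ρ
        (fun i t => (p i).eval t) (fun i t => ((p i).derivative).eval t)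
        (fun i t => (p i).eval t) (fun i t => ((p i).derivative).eval t) :=
  statement2_general N hN x hx0 hxN hmono ε β γ hβ a a' b ha ha' haβ hb hbγ ρ p
end

section
/- Let 0 = x_0 < x_1 < ⋯ < x_N = 1 be a partition of [0,1], let ε > 0, let a ∈ C¹([0,1]) with a(x) ≥ β > 0, let b be continuous with b(x) − a′(x)/2 ≥ γ > 0 on [0,1], let ρ(x_i) ≥ 0 for 0 ≤ i ≤ N, and let f be integrable on [0,1]. Then there exists a unique u_N ∈ V_N^k such that B(u_N, v) = ∫_0^1 f v dx for all v ∈ V_N^k. -/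
open Set Finset

/-!
The energy argument. For broken polynomials `v`, the two NIPG flux terms cancel in `B(v, v)`, and
integrating `a v' v` by parts on each element turns the upwind terms into squared jumps:
`B(v, v) = ε ∑ ∫ (v')² + ∑ ρ(x_i) [v(x_i)]² + ½ ∑ a(x_i) [v(x_i)]² + ∑ ∫ (b - a'/2) v² ≥ γ ‖v‖²`.
So `B(v, v) = 0` forces `v = 0`, i.e. `v ↦ B(v, ·)` is injective from the finite-dimensional space
`V_N^k` to its dual, hence bijective, which is existence and uniqueness of the discrete solution.
-/

open MeasureTheory intervalIntegral Polynomial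

namespace NIPG

structure IsPartition (N : ℕ) (x : ℕ → ℝ) : Prop where
  zero : x 0 = 0
  last : x N = 1
  lt_succ : ∀ i < N, x i < x (i + 1)

variable {N k : ℕ} {x : ℕ → ℝ} {ε : ℝ} {a a' b : ℝ → ℝ} {ρ : ℕ → ℝ}

namespace IsPartition

lemma strictMonoOn (hx : IsPartition N x) : StrictMonoOn x (Set.Iic N) :=
  strictMonoOn_Iic_of_lt_succ fun m hm => by simpa using hx.lt_succ m hm

lemma mem_Icc (hx : IsPartition N x) {i : ℕ} (hi : i ≤ N) : x i ∈ Set.Icc (0 : ℝ) 1 := by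
  constructor
  · rw [← hx.zero]; exact hx.strictMonoOn.monotoneOn (Nat.zero_le N) hi (Nat.zero_le i)
  · rw [← hx.last]; exact hx.strictMonoOn.monotoneOn hi (le_refl N) hi

lemma sub_one_lt (hx : IsPartition N x) {i : ℕ} (hi : i ∈ Finset.Icc 1 N) : x (i - 1) < x i := by
  obtain ⟨h1, h2⟩ := Finset.mem_Icc.1 hi
  simpa [Nat.sub_add_cancel h1] using hx.lt_succ (i - 1) (by omega)

lemma uIcc_subset (hx : IsPartition N x) {i : ℕ} (hi : i ∈ Finset.Icc 1 N) :
    Set.uIcc (x (i - 1)) (x i) ⊆ Set.Icc 0 1 := by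
  rw [Set.uIcc_of_le (hx.sub_one_lt hi).le]
  exact Set.Icc_subset_Icc (hx.mem_Icc (by grind)).1 (hx.mem_Icc (by grind)).2

lemma intervalIntegrable (hx : IsPartition N x) {i : ℕ} (hi : i ∈ Finset.Icc 1 N) {g : ℝ → ℝ}
    (hg : ContinuousOn g (Set.Icc 0 1)) : IntervalIntegrable g volume (x (i - 1)) (x i) :=
  (hg.mono (hx.uIcc_subset hi)).intervalIntegrable

lemma intervalIntegrable_mul_eval_mul_eval (hx : IsPartition N x) {i : ℕ}
    (hi : i ∈ Finset.Icc 1 N) {c : ℝ → ℝ} (hc : ContinuousOn c (Set.Icc 0 1)) (p q : ℝ[X]) :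
    IntervalIntegrable (fun t => c t * p.eval t * q.eval t) volume (x (i - 1)) (x i) :=
  hx.intervalIntegrable hi <| (hc.mul p.continuous.continuousOn).mul q.continuous.continuousOn

lemma sum_integral_add (hx : IsPartition N x) {c : ℝ → ℝ} (hc : ContinuousOn c (Set.Icc 0 1))
    (p₁ q₁ p₂ q₂ : ℕ → ℝ[X]) :
    ∑ i ∈ Finset.Icc 1 N, ∫ t in x (i - 1)..x i,
        (c t * (p₁ i).eval t * (q₁ i).eval t + c t * (p₂ i).eval t * (q₂ i).eval t)
      = (∑ i ∈ Finset.Icc 1 N, ∫ t in x (i - 1)..x i, c t * (p₁ i).eval t * (q₁ i).eval t)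
        + ∑ i ∈ Finset.Icc 1 N, ∫ t in x (i - 1)..x i, c t * (p₂ i).eval t * (q₂ i).eval t := by
  rw [← sum_add_distrib]
  exact sum_congr rfl fun i hi => integral_add
    (hx.intervalIntegrable_mul_eval_mul_eval hi hc _ _)
    (hx.intervalIntegrable_mul_eval_mul_eval hi hc _ _)

lemma integral_sq_nonneg (hx : IsPartition N x) {i : ℕ} (hi : i ∈ Finset.Icc 1 N) (p : ℝ[X]) :
    0 ≤ ∫ t in x (i - 1)..x i, p.eval t ^ 2 :=
  integral_nonneg (hx.sub_one_lt hi).le fun _ _ => sq_nonneg _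

end IsPartition

lemma brokenJump_add (w₁ w₂ : ℕ → ℝ → ℝ) (i : ℕ) :
    brokenJump N x (fun j t => w₁ j t + w₂ j t) i = brokenJump N x w₁ i + brokenJump N x w₂ i := by
  unfold brokenJump; split_ifs <;> ring

lemma brokenJump_smul (α : ℝ) (w : ℕ → ℝ → ℝ) (i : ℕ) :
    brokenJump N x (fun j t => α • w j t) i = α • brokenJump N x w i := by
  unfold brokenJump; simp only [smul_eq_mul]; split_ifs <;> ring

lemma brokenAvg_add (w₁ w₂ : ℕ → ℝ → ℝ) (i : ℕ) :
    brokenAvg N x (fun j t => w₁ j t + w₂ j t) i = brokenAvg N x w₁ i + brokenAvg N x w₂ i := by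
  unfold brokenAvg; split_ifs <;> ring

lemma brokenAvg_smul (α : ℝ) (w : ℕ → ℝ → ℝ) (i : ℕ) :
    brokenAvg N x (fun j t => α • w j t) i = α • brokenAvg N x w i := by
  unfold brokenAvg; simp only [smul_eq_mul]; split_ifs <;> ring

lemma brokenJump_congr (hN : 1 ≤ N) {w₁ w₂ : ℕ → ℝ → ℝ}
    (hw : ∀ j ∈ Finset.Icc 1 N, w₁ j = w₂ j) {i : ℕ} (hi : i ≤ N) :
    brokenJump N x w₁ i = brokenJump N x w₂ i := by
  unfold brokenJump
  split_ifs <;> grind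

lemma brokenAvg_congr (hN : 1 ≤ N) {w₁ w₂ : ℕ → ℝ → ℝ}
    (hw : ∀ j ∈ Finset.Icc 1 N, w₁ j = w₂ j) {i : ℕ} (hi : i ≤ N) :
    brokenAvg N x w₁ i = brokenAvg N x w₂ i := by
  unfold brokenAvg
  split_ifs <;> grind

lemma brokenJump_add_eq (w : ℕ → ℝ → ℝ) {i : ℕ} (hi : i < N) :
    brokenJump N x w i + w (i + 1) (x i) = if i = 0 then 0 else w i (x i) := by
  unfold brokenJump
  rcases eq_or_ne i 0 with rfl | h0
  · simp
  · simp [h0, hi.ne]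

lemma sum_Icc_one_eq_sum_range {M : Type*} [AddCommMonoid M] (f : ℕ → M) (n : ℕ) :
    ∑ i ∈ Finset.Icc 1 n, f i = ∑ i ∈ Finset.range n, f (i + 1) := by
  rw [← Finset.Ico_add_one_right_eq_Icc, Finset.sum_Ico_eq_sum_range]
  simp [add_comm]

/-- By `brokenJump_add_eq`, `[w(x_i)] + w_{i+1}(x_i)` is the left trace `L_i` (with `L_0 = 0`), so
the `i`-th term on the left is `½ (A_{i+1} L_{i+1}² - A_i L_i²) + ½ A_i [w(x_i)]²`, and the first
part telescopes. -/
lemma sum_traces_sub_sum_upwind_eq_sum_jump_sq (hN : 1 ≤ N) (A : ℕ → ℝ) (w : ℕ → ℝ → ℝ) :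
    (∑ i ∈ Finset.Icc 1 N, (A i * w i (x i) ^ 2 - A (i - 1) * w i (x (i - 1)) ^ 2) / 2)
      - ∑ i ∈ Finset.Icc 0 (N - 1), A i * brokenJump N x w i * w (i + 1) (x i)
    = ∑ i ∈ Finset.Icc 0 N, A i * brokenJump N x w i ^ 2 / 2 := by
  set J := brokenJump N x w
  let energy i := A i * (if i = 0 then 0 else w i (x i)) ^ 2 / 2
  obtain ⟨M, rfl⟩ : ∃ M, N = M + 1 := ⟨N - 1, by omega⟩
  have hJ : J (M + 1) = w (M + 1) (x (M + 1)) := by simp [J, brokenJump]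
  have hterm : ∀ i ∈ Finset.range (M + 1),
      (A (i + 1) * w (i + 1) (x (i + 1)) ^ 2 - A i * w (i + 1) (x i) ^ 2) / 2
        - A i * J i * w (i + 1) (x i) = (energy (i + 1) - energy i) + A i * J i ^ 2 / 2 := by
    intro i hi
    simp only [energy, ← brokenJump_add_eq w (Finset.mem_range.1 hi), J, Nat.add_one_ne_zero,
      if_false]
    ring
  rw [sum_Icc_one_eq_sum_range]
  simp only [Nat.add_sub_cancel]
  rw [← Nat.range_succ_eq_Icc_zero, ← Nat.range_succ_eq_Icc_zero, Finset.sum_range_succ _ (M + 1),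
    ← sum_sub_distrib, Finset.sum_congr rfl hterm, sum_add_distrib, Finset.sum_range_sub]
  simp [energy, hJ]
  ring

attribute [local congr] Finset.sum_congr

lemma nipgB_congr (hN : 1 ≤ N) {u₁ u₁' v₁ v₁' u₂ u₂' v₂ v₂' : ℕ → ℝ → ℝ}
    (hu : ∀ j ∈ Finset.Icc 1 N, u₁ j = u₂ j) (hu' : ∀ j ∈ Finset.Icc 1 N, u₁' j = u₂' j)
    (hv : ∀ j ∈ Finset.Icc 1 N, v₁ j = v₂ j) (hv' : ∀ j ∈ Finset.Icc 1 N, v₁' j = v₂' j) :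
    nipgB N x ε a b ρ u₁ u₁' v₁ v₁' = nipgB N x ε a b ρ u₂ u₂' v₂ v₂' := by
  have hJ {w₁ w₂ : ℕ → ℝ → ℝ} (hw : ∀ j ∈ Finset.Icc 1 N, w₁ j = w₂ j) :
      ∀ i ∈ Finset.Icc 0 N, brokenJump N x w₁ i = brokenJump N x w₂ i := fun i hi =>
    brokenJump_congr hN hw (Finset.mem_Icc.1 hi).2
  have hJ' {w₁ w₂ : ℕ → ℝ → ℝ} (hw : ∀ j ∈ Finset.Icc 1 N, w₁ j = w₂ j) :
      ∀ i ∈ Finset.Icc 0 (N - 1), brokenJump N x w₁ i = brokenJump N x w₂ i := fun i hi =>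
    brokenJump_congr hN hw (by grind)
  have hA {w₁ w₂ : ℕ → ℝ → ℝ} (hw : ∀ j ∈ Finset.Icc 1 N, w₁ j = w₂ j) :
      ∀ i ∈ Finset.Icc 0 N, brokenAvg N x w₁ i = brokenAvg N x w₂ i := fun i hi =>
    brokenAvg_congr hN hw (Finset.mem_Icc.1 hi).2
  have hv_succ : ∀ i ∈ Finset.Icc 0 (N - 1), v₁ (i + 1) = v₂ (i + 1) := fun i hi =>
    hv _ (by grind)
  simp (contextual := true) only [nipgB, hu, hu', hv, hv', hv_succ, hJ hu, hJ hv, hJ' hu,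
    hA hu', hA hv']

noncomputable def nipgBPoly (N : ℕ) (x : ℕ → ℝ) (ε : ℝ) (a b : ℝ → ℝ) (ρ : ℕ → ℝ)
    (u v : ℕ → ℝ[X]) : ℝ :=
  nipgB N x ε a b ρ (fun i t => (u i).eval t) (fun i t => (u i).derivative.eval t)
    (fun i t => (v i).eval t) (fun i t => (v i).derivative.eval t)

lemma nipgBPoly_congr (hN : 1 ≤ N) {u₁ u₂ v₁ v₂ : ℕ → ℝ[X]}
    (hu : ∀ i ∈ Finset.Icc 1 N, u₁ i = u₂ i) (hv : ∀ i ∈ Finset.Icc 1 N, v₁ i = v₂ i) :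
    nipgBPoly N x ε a b ρ u₁ v₁ = nipgBPoly N x ε a b ρ u₂ v₂ :=
  nipgB_congr hN (fun j hj => by simp [hu j hj]) (fun j hj => by simp [hu j hj])
    (fun j hj => by simp [hv j hj]) (fun j hj => by simp [hv j hj])

lemma nipgBPoly_add_left (hx : IsPartition N x) (ha : ContinuousOn a (Set.Icc 0 1))
    (hb : ContinuousOn b (Set.Icc 0 1)) (u₁ u₂ v : ℕ → ℝ[X]) :
    nipgBPoly N x ε a b ρ (u₁ + u₂) v
      = nipgBPoly N x ε a b ρ u₁ v + nipgBPoly N x ε a b ρ u₂ v := by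
  simp only [nipgBPoly, nipgB, Pi.add_apply, derivative_add, eval_add, brokenJump_add,
    brokenAvg_add, mul_add, add_mul, sum_add_distrib]
  rw [hx.sum_integral_add continuousOn_const, hx.sum_integral_add ha, hx.sum_integral_add hb]
  ring

lemma nipgBPoly_add_right (hx : IsPartition N x) (ha : ContinuousOn a (Set.Icc 0 1))
    (hb : ContinuousOn b (Set.Icc 0 1)) (u v₁ v₂ : ℕ → ℝ[X]) :
    nipgBPoly N x ε a b ρ u (v₁ + v₂)
      = nipgBPoly N x ε a b ρ u v₁ + nipgBPoly N x ε a b ρ u v₂ := by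
  simp only [nipgBPoly, nipgB, Pi.add_apply, derivative_add, eval_add, brokenJump_add,
    brokenAvg_add, mul_add, add_mul, sum_add_distrib]
  rw [hx.sum_integral_add continuousOn_const, hx.sum_integral_add ha, hx.sum_integral_add hb]
  ring

lemma nipgBPoly_smul_left (α : ℝ) (u v : ℕ → ℝ[X]) :
    nipgBPoly N x ε a b ρ (α • u) v = α • nipgBPoly N x ε a b ρ u v := by
  simp only [nipgBPoly, nipgB, Pi.smul_apply, derivative_smul, eval_smul, brokenJump_smul,
    brokenAvg_smul, mul_smul_comm, smul_mul_assoc, intervalIntegral.integral_smul, ← smul_sum]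
  simp only [smul_eq_mul]
  ring

lemma nipgBPoly_smul_right (α : ℝ) (u v : ℕ → ℝ[X]) :
    nipgBPoly N x ε a b ρ u (α • v) = α • nipgBPoly N x ε a b ρ u v := by
  simp only [nipgBPoly, nipgB, Pi.smul_apply, derivative_smul, eval_smul, brokenJump_smul,
    brokenAvg_smul, mul_smul_comm, smul_mul_assoc, intervalIntegral.integral_smul, ← smul_sum]
  simp only [smul_eq_mul]
  ring

lemma integral_mul_deriv_eval_mul_eval {l r : ℝ}
    (ha : ∀ t ∈ Set.uIcc l r, HasDerivWithinAt a (a' t) (Set.uIcc l r) t)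
    (ha' : IntervalIntegrable a' volume l r) (p : ℝ[X]) :
    ∫ t in l..r, a t * p.derivative.eval t * p.eval t
      = (a r * p.eval r ^ 2 - a l * p.eval l ^ 2) / 2 - ∫ t in l..r, a' t * (p.eval t ^ 2 / 2) := by
  have hp : ∀ t ∈ Set.uIcc l r, HasDerivWithinAt (fun t => p.eval t ^ 2 / 2)
      (p.derivative.eval t * p.eval t) (Set.uIcc l r) t := fun t _ =>
    ((((p.hasDerivAt t).fun_pow 2).div_const 2).congr_deriv (by push_cast; ring)).hasDerivWithinAt
  have := integral_mul_deriv_eq_deriv_mul_of_hasDerivWithinAt ha hp ha'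
    ((p.derivative.continuous.mul p.continuous).intervalIntegrable l r)
  simp only [mul_assoc] at this ⊢
  rw [this]
  ring

lemma nipgBPoly_self_eq (hN : 1 ≤ N) (hx : IsPartition N x)
    (ha : ∀ t ∈ Set.Icc (0 : ℝ) 1, HasDerivWithinAt a (a' t) (Set.Icc 0 1) t)
    (ha' : ContinuousOn a' (Set.Icc 0 1)) (hb : ContinuousOn b (Set.Icc 0 1))
    (v : ℕ → ℝ[X]) :
    nipgBPoly N x ε a b ρ v v
      = (∑ i ∈ Finset.Icc 1 N, ∫ t in x (i - 1)..x i,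
            ε * (v i).derivative.eval t * (v i).derivative.eval t)
        + (∑ i ∈ Finset.Icc 0 N, ρ i * brokenJump N x (fun j t => (v j).eval t) i
            * brokenJump N x (fun j t => (v j).eval t) i)
        + (∑ i ∈ Finset.Icc 0 N, a (x i) * brokenJump N x (fun j t => (v j).eval t) i ^ 2 / 2)
        + ∑ i ∈ Finset.Icc 1 N, ∫ t in x (i - 1)..x i, (b t - a' t / 2) * (v i).eval t ^ 2 := by
  have hibp : (∑ i ∈ Finset.Icc 1 N, ∫ t in x (i - 1)..x i,
        a t * (v i).derivative.eval t * (v i).eval t)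
      = (∑ i ∈ Finset.Icc 1 N,
          (a (x i) * (v i).eval (x i) ^ 2 - a (x (i - 1)) * (v i).eval (x (i - 1)) ^ 2) / 2)
        - ∑ i ∈ Finset.Icc 1 N, ∫ t in x (i - 1)..x i, a' t * ((v i).eval t ^ 2 / 2) := by
    rw [← sum_sub_distrib]
    refine sum_congr rfl fun i hi => integral_mul_deriv_eval_mul_eval (fun t ht => ?_)
      (hx.intervalIntegrable hi ha') _
    exact (ha t (hx.uIcc_subset hi ht)).mono (hx.uIcc_subset hi)
  have hreact : (∑ i ∈ Finset.Icc 1 N, ∫ t in x (i - 1)..x i, b t * (v i).eval t * (v i).eval t)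
      - (∑ i ∈ Finset.Icc 1 N, ∫ t in x (i - 1)..x i, a' t * ((v i).eval t ^ 2 / 2))
      = ∑ i ∈ Finset.Icc 1 N, ∫ t in x (i - 1)..x i, (b t - a' t / 2) * (v i).eval t ^ 2 := by
    rw [← sum_sub_distrib]
    refine sum_congr rfl fun i hi => ?_
    have hI : IntervalIntegrable (fun t => a' t * ((v i).eval t ^ 2 / 2)) volume
        (x (i - 1)) (x i) :=
      hx.intervalIntegrable hi (ha'.mul (((v i).continuous.pow 2).div_const 2).continuousOn)
    rw [← integral_sub (hx.intervalIntegrable_mul_eval_mul_eval hi hb _ _) hI]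
    exact integral_congr fun t _ => by ring
  have hjump := sum_traces_sub_sum_upwind_eq_sum_jump_sq (x := x) hN (fun i => a (x i))
    (fun i t => (v i).eval t)
  simp only [nipgBPoly, nipgB]
  linear_combination hibp + hjump + hreact

lemma le_nipgBPoly_self (hN : 1 ≤ N) (hx : IsPartition N x) {γ : ℝ} (hε : 0 ≤ ε)
    (ha : ∀ t ∈ Set.Icc (0 : ℝ) 1, HasDerivWithinAt a (a' t) (Set.Icc 0 1) t)
    (ha' : ContinuousOn a' (Set.Icc 0 1)) (ha₀ : ∀ t ∈ Set.Icc (0 : ℝ) 1, 0 ≤ a t)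
    (hb : ContinuousOn b (Set.Icc 0 1)) (hbγ : ∀ t ∈ Set.Icc (0 : ℝ) 1, γ ≤ b t - a' t / 2)
    (hρ : ∀ i, 0 ≤ ρ i) (v : ℕ → ℝ[X]) :
    γ * ∑ i ∈ Finset.Icc 1 N, ∫ t in x (i - 1)..x i, (v i).eval t ^ 2
      ≤ nipgBPoly N x ε a b ρ v v := by
  rw [nipgBPoly_self_eq hN hx ha ha' hb]
  have hdiff : 0 ≤ ∑ i ∈ Finset.Icc 1 N, ∫ t in x (i - 1)..x i,
      ε * (v i).derivative.eval t * (v i).derivative.eval t :=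
    sum_nonneg fun i hi => integral_nonneg (hx.sub_one_lt hi).le fun t _ => by
      rw [mul_assoc]; exact mul_nonneg hε (mul_self_nonneg _)
  have hpen : 0 ≤ ∑ i ∈ Finset.Icc 0 N, ρ i * brokenJump N x (fun j t => (v j).eval t) i
      * brokenJump N x (fun j t => (v j).eval t) i :=
    sum_nonneg fun i _ => by rw [mul_assoc]; exact mul_nonneg (hρ i) (mul_self_nonneg _)
  have hupw : 0 ≤ ∑ i ∈ Finset.Icc 0 N,
      a (x i) * brokenJump N x (fun j t => (v j).eval t) i ^ 2 / 2 :=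
    sum_nonneg fun i hi => by
      have := ha₀ _ (hx.mem_Icc (Finset.mem_Icc.1 hi).2)
      positivity
  have hreact : γ * ∑ i ∈ Finset.Icc 1 N, ∫ t in x (i - 1)..x i, (v i).eval t ^ 2
      ≤ ∑ i ∈ Finset.Icc 1 N, ∫ t in x (i - 1)..x i, (b t - a' t / 2) * (v i).eval t ^ 2 := by
    rw [mul_sum]
    refine sum_le_sum fun i hi => ?_
    rw [← intervalIntegral.integral_const_mul]
    refine integral_mono_on (hx.sub_one_lt hi).le
      (((v i).continuous.pow 2).const_mul γ |>.intervalIntegrable _ _)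
      (hx.intervalIntegrable hi ((hb.sub (ha'.div_const 2)).mul
        ((v i).continuous.pow 2).continuousOn)) fun t ht => ?_
    exact mul_le_mul_of_nonneg_right (hbγ t (hx.uIcc_subset hi (Set.Icc_subset_uIcc ht)))
      (sq_nonneg _)
  linarith

lemma integral_sq_eval_pos {p : ℝ[X]} (hp : p ≠ 0) {l r : ℝ} (hlr : l < r) :
    0 < ∫ t in l..r, p.eval t ^ 2 := by
  obtain ⟨c, hc, hpc⟩ : ∃ c ∈ Set.Icc l r, p.eval c ≠ 0 := by
    by_contra! h
    exact hp (p.eq_zero_of_infinite_isRoot ((Set.Icc_infinite hlr).mono h))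
  exact integral_pos hlr (p.continuous.pow 2).continuousOn (fun _ _ => sq_nonneg _)
    ⟨c, hc, by positivity⟩

lemma IsPartition.eq_zero_of_sum_integral_sq_nonpos (hx : IsPartition N x) {v : ℕ → ℝ[X]}
    (hv : ∑ i ∈ Finset.Icc 1 N, ∫ t in x (i - 1)..x i, (v i).eval t ^ 2 ≤ 0) :
    ∀ i ∈ Finset.Icc 1 N, v i = 0 := by
  intro i hi
  by_contra hvi
  have := single_le_sum (fun j hj => hx.integral_sq_nonneg hj (v j)) hi
  linarith [integral_sq_eval_pos hvi (hx.sub_one_lt hi)]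

lemma existsUnique_eq_of_anisotropic {K V : Type*} [Field K] [AddCommGroup V] [Module K V]
    [FiniteDimensional K V] (B : V →ₗ[K] V →ₗ[K] K) (hB : ∀ v, B v v = 0 → v = 0)
    (F : Module.Dual K V) : ∃! u, B u = F := by
  have hinj : Function.Injective B :=
    (injective_iff_map_eq_zero B).2 fun v hv => hB v (by rw [hv, LinearMap.zero_apply])
  have hsurj := (LinearMap.injective_iff_surjective_of_finrank_eq_finrank
    Subspace.dual_finrank_eq.symm).1 hinj
  exact (Function.Bijective.existsUnique ⟨hinj, hsurj⟩) F

/-- `V_N^k`, by the pieces on `I_1, …, I_N`. The statement's families `ℕ → ℝ[X]` also carry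
pieces outside `1, …, N`, which neither `B` nor the load reads. -/
abbrev BrokenSpace (N k : ℕ) := Finset.Icc 1 N → degreeLT ℝ (k + 1)

lemma mem_degreeLT_succ_iff {p : ℝ[X]} : p ∈ degreeLT ℝ (k + 1) ↔ p.natDegree ≤ k := by
  rw [degreeLT_succ_eq_degreeLE, mem_degreeLE, natDegree_le_iff_degree_le]

noncomputable def extendByZero (N k : ℕ) : BrokenSpace N k →ₗ[ℝ] ℕ → ℝ[X] where
  toFun w i := if h : i ∈ Finset.Icc 1 N then (w ⟨i, h⟩ : ℝ[X]) else 0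
  map_add' w₁ w₂ := by ext1 i; simp only [Pi.add_apply]; split_ifs <;> simp
  map_smul' α w := by ext1 i; simp only [Pi.smul_apply]; split_ifs <;> simp

lemma extendByZero_apply (w : BrokenSpace N k) (i : ℕ) :
    extendByZero N k w i = if h : i ∈ Finset.Icc 1 N then (w ⟨i, h⟩ : ℝ[X]) else 0 :=
  rfl

lemma extendByZero_of_mem (w : BrokenSpace N k) {i : ℕ} (hi : i ∈ Finset.Icc 1 N) :
    extendByZero N k w i = w ⟨i, hi⟩ :=
  dif_pos hi

lemma natDegree_extendByZero_le (w : BrokenSpace N k) (i : ℕ) :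
    (extendByZero N k w i).natDegree ≤ k := by
  rw [extendByZero_apply]
  split_ifs
  · exact mem_degreeLT_succ_iff.1 (w _).2
  · simp

def restrict (u : ℕ → ℝ[X]) (hu : ∀ i, (u i).natDegree ≤ k) : BrokenSpace N k :=
  fun i => ⟨u i, mem_degreeLT_succ_iff.2 (hu i)⟩

lemma extendByZero_restrict {u : ℕ → ℝ[X]} (hu : ∀ i, (u i).natDegree ≤ k) :
    ∀ i ∈ Finset.Icc 1 N, extendByZero N k (restrict u hu) i = u i :=
  fun _ hi => extendByZero_of_mem _ hi

noncomputable def nipgForm (k : ℕ) (ε : ℝ) (ρ : ℕ → ℝ) (hx : IsPartition N x)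
    (ha : ContinuousOn a (Set.Icc 0 1)) (hb : ContinuousOn b (Set.Icc 0 1)) :
    BrokenSpace N k →ₗ[ℝ] BrokenSpace N k →ₗ[ℝ] ℝ :=
  LinearMap.mk₂ ℝ (fun w v => nipgBPoly N x ε a b ρ (extendByZero N k w) (extendByZero N k v))
    (fun _ _ _ => by simp only [map_add]; exact nipgBPoly_add_left hx ha hb _ _ _)
    (fun _ _ _ => by simp only [map_smul]; exact nipgBPoly_smul_left _ _ _)
    (fun _ _ _ => by simp only [map_add]; exact nipgBPoly_add_right hx ha hb _ _ _)
    (fun _ _ _ => by simp only [map_smul]; exact nipgBPoly_smul_right _ _ _)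

noncomputable def loadFunctional (k : ℕ) {f : ℝ → ℝ} (hx : IsPartition N x)
    (hf : IntegrableOn f (Set.Icc 0 1)) : Module.Dual ℝ (BrokenSpace N k) where
  toFun v := ∑ i ∈ Finset.Icc 1 N, ∫ t in x (i - 1)..x i, f t * (extendByZero N k v i).eval t
  map_add' v₁ v₂ := by
    have hI (p : ℝ[X]) {i : ℕ} (hi : i ∈ Finset.Icc 1 N) :
        IntervalIntegrable (fun t => f t * p.eval t) volume (x (i - 1)) (x i) :=
      ((hf.mono_set (hx.uIcc_subset hi)).mul_continuousOn p.continuous.continuousOn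
        isCompact_uIcc).intervalIntegrable
    simp only [map_add, Pi.add_apply, eval_add, mul_add, ← sum_add_distrib]
    exact sum_congr rfl fun i hi => integral_add (hI _ hi) (hI _ hi)
  map_smul' α v := by
    simp only [map_smul, Pi.smul_apply, eval_smul, mul_smul_comm, intervalIntegral.integral_smul,
      ← smul_sum, RingHom.id_apply]

lemma loadFunctional_restrict {f : ℝ → ℝ} (hx : IsPartition N x)
    (hf : IntegrableOn f (Set.Icc 0 1)) {v : ℕ → ℝ[X]} (hv : ∀ i, (v i).natDegree ≤ k) :
    loadFunctional k hx hf (restrict v hv)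
      = ∑ i ∈ Finset.Icc 1 N, ∫ t in x (i - 1)..x i, f t * (v i).eval t := by
  change ∑ i ∈ Finset.Icc 1 N, _ = _
  exact sum_congr rfl fun i hi => by rw [extendByZero_restrict hv i hi]

end NIPG

open NIPG

/-- Well-posedness of the NIPG discrete problem: under the coercivity assumptions
on the data there is a unique `u_N ∈ V_N^k` with `B(u_N, v) = ∫₀¹ f v` for all
`v ∈ V_N^k` (uniqueness means any two discrete solutions agree on every element). -/
theorem statement4 (N k : ℕ) (hN : 1 ≤ N) (x : ℕ → ℝ)
    (hx0 : x 0 = 0) (hxN : x N = 1) (hmono : ∀ i < N, x i < x (i + 1))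
    (ε β γ : ℝ) (hε : 0 < ε) (hβ : 0 < β) (hγ : 0 < γ)
    (a a' b : ℝ → ℝ)
    (ha : ∀ t ∈ Icc (0:ℝ) 1, HasDerivWithinAt a (a' t) (Icc 0 1) t)
    (ha' : ContinuousOn a' (Icc 0 1))
    (haβ : ∀ t ∈ Icc (0:ℝ) 1, β ≤ a t)
    (hb : ContinuousOn b (Icc 0 1))
    (hbγ : ∀ t ∈ Icc (0:ℝ) 1, γ ≤ b t - a' t / 2)
    (ρ : ℕ → ℝ) (hρ : ∀ i, 0 ≤ ρ i)
    (f : ℝ → ℝ) (hf : MeasureTheory.IntegrableOn f (Icc 0 1)) :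
    ∃ uN : ℕ → Polynomial ℝ,
      (∀ i, (uN i).natDegree ≤ k) ∧
      (∀ v : ℕ → Polynomial ℝ, (∀ i, (v i).natDegree ≤ k) →
        nipgB N x ε a b ρ
            (fun i t => (uN i).eval t) (fun i t => ((uN i).derivative).eval t)
            (fun i t => (v i).eval t) (fun i t => ((v i).derivative).eval t)
          = ∑ i ∈ Finset.Icc 1 N, ∫ t in (x (i - 1))..(x i), f t * (v i).eval t) ∧
      (∀ wN : ℕ → Polynomial ℝ, (∀ i, (wN i).natDegree ≤ k) →
        (∀ v : ℕ → Polynomial ℝ, (∀ i, (v i).natDegree ≤ k) →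
          nipgB N x ε a b ρ
              (fun i t => (wN i).eval t) (fun i t => ((wN i).derivative).eval t)
              (fun i t => (v i).eval t) (fun i t => ((v i).derivative).eval t)
            = ∑ i ∈ Finset.Icc 1 N, ∫ t in (x (i - 1))..(x i), f t * (v i).eval t) →
        ∀ i ∈ Finset.Icc 1 N, wN i = uN i) := by
  have hx : IsPartition N x := ⟨hx0, hxN, hmono⟩
  have hac : ContinuousOn a (Icc 0 1) := fun t ht => (ha t ht).continuousWithinAt
  set B := nipgForm k ε ρ hx hac hb
  have hB : ∀ w, B w w = 0 → w = 0 := fun w hw => by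
    have hcoer := le_nipgBPoly_self hN hx hε.le ha ha' (fun t ht => hβ.le.trans (haβ t ht)) hb
      hbγ hρ (extendByZero N k w)
    have hzero := hx.eq_zero_of_sum_integral_sq_nonpos
      (nonpos_of_mul_nonpos_right (hcoer.trans_eq hw) hγ)
    exact funext fun j => Subtype.ext (by rw [← extendByZero_of_mem w j.2]; exact hzero j j.2)
  obtain ⟨w, hw, hw_unique⟩ := existsUnique_eq_of_anisotropic B hB (loadFunctional k hx hf)
  refine ⟨extendByZero N k w, natDegree_extendByZero_le w, fun v hv => ?_,
    fun u hu hsol i hi => ?_⟩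
  · calc nipgBPoly N x ε a b ρ (extendByZero N k w) v = B w (restrict v hv) :=
          nipgBPoly_congr hN (fun _ _ => rfl) fun i hi => (extendByZero_restrict hv i hi).symm
      _ = _ := by rw [hw, loadFunctional_restrict]
  · have hu_eq : restrict u hu = w := hw_unique _ <| LinearMap.ext fun v =>
      (nipgBPoly_congr hN (extendByZero_restrict hu) fun _ _ => rfl).trans
        (hsol _ (natDegree_extendByZero_le v))
    rw [← extendByZero_restrict hu i hi, hu_eq]
end

section
/- Let k ≥ 1 be an integer, let [c, d] be a nondegenerate compact interval, and let u : [c, d] → ℝ be continuous. Then there exists a unique polynomial p of degree at most k such that ∫_c^d p(x) q(x) dx = ∫_c^d u(x) q(x) dx for every polynomial q of degree at most k−1, and p(d) = u(d). -/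
open MeasureTheory Polynomial

private lemma radau_intble (c d : ℝ) (p : Polynomial ℝ) (i : ℕ) :
    IntervalIntegrable (fun x => p.eval x * x ^ i) volume c d :=
  (p.continuous.mul (continuous_pow i)).intervalIntegrable _ _

/-- Moment linear map `p ↦ ∫_c^d p(x) x^i dx`. -/
noncomputable def radauMomL (c d : ℝ) (i : ℕ) : Polynomial ℝ →ₗ[ℝ] ℝ where
  toFun p := ∫ x in c..d, p.eval x * x ^ i
  map_add' p q := by
    simp only [eval_add, add_mul]
    exact intervalIntegral.integral_add (radau_intble c d p i) (radau_intble c d q i)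
  map_smul' a p := by
    simp only [eval_smul, smul_eq_mul, RingHom.id_apply, mul_assoc]
    rw [← intervalIntegral.integral_const_mul]

/-- The combined linear map: `k` moments and evaluation at `d`. -/
noncomputable def radauL (k : ℕ) (c d : ℝ) : Polynomial ℝ →ₗ[ℝ] (Fin (k + 1) → ℝ) :=
  LinearMap.pi fun i => if (i : ℕ) < k then radauMomL c d (i : ℕ) else Polynomial.leval d

private lemma radau_aux {c d : ℝ} (hcd : c < d) (r : Polynomial ℝ)
    (h : (∫ x in c..d, (d - x) * r.eval x ^ 2) = 0) : r = 0 := by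
  have hf : Continuous fun x : ℝ => (d - x) * r.eval x ^ 2 :=
    (continuous_const.sub continuous_id).mul (r.continuous.pow 2)
  have hnn : 0 ≤ᵐ[volume.restrict (Set.Ioc c d)] fun x : ℝ => (d - x) * r.eval x ^ 2 :=
    (ae_restrict_iff' measurableSet_Ioc).2 (Filter.Eventually.of_forall fun x hx =>
      mul_nonneg (sub_nonneg.2 hx.2) (sq_nonneg _))
  have h0 := (intervalIntegral.integral_eq_zero_iff_of_le_of_nonneg_ae hcd.le hnn
      (hf.intervalIntegrable _ _)).mp h
  have heq : Set.EqOn (fun x : ℝ => (d - x) * r.eval x ^ 2) 0 (Set.Ioc c d) :=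
    Measure.eqOn_Ioc_of_ae_eq volume h0 hf.continuousOn continuousOn_const
  apply Polynomial.eq_zero_of_infinite_isRoot
  apply (Set.Ioo_infinite hcd).mono
  intro x hx
  have hx' : x ∈ Set.Ioc c d := ⟨hx.1, hx.2.le⟩
  have := heq hx'
  simp only [Pi.zero_apply] at this
  have hdx : d - x ≠ 0 := sub_ne_zero.2 (ne_of_gt hx.2)
  have : r.eval x ^ 2 = 0 := by
    rcases mul_eq_zero.1 this with h' | h'
    · exact absurd h' hdx
    · exact h'
  simpa [Polynomial.IsRoot] using pow_eq_zero_iff (n := 2) (by norm_num) |>.mp this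

private lemma radau_unique {k : ℕ} (hk : 1 ≤ k) {c d : ℝ} (hcd : c < d) (p : Polynomial ℝ)
    (hdeg : p.natDegree ≤ k)
    (hmom : ∀ q : Polynomial ℝ, q.natDegree ≤ k - 1 →
      (∫ x in c..d, p.eval x * q.eval x) = 0)
    (hd : p.eval d = 0) : p = 0 := by
  obtain ⟨r, hr⟩ := (Polynomial.dvd_iff_isRoot).2 hd
  by_cases hr0 : r = 0
  · simp [hr, hr0]
  have hrd : r.natDegree ≤ k - 1 := by
    have h1 : p.natDegree = 1 + r.natDegree := by
      rw [hr, Polynomial.natDegree_mul (Polynomial.X_sub_C_ne_zero d) hr0,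
        Polynomial.natDegree_X_sub_C]
    omega
  have h := hmom r hrd
  rw [hr] at h
  simp only [Polynomial.eval_mul, Polynomial.eval_sub, Polynomial.eval_X,
    Polynomial.eval_C] at h
  have h2 : (∫ x in c..d, (d - x) * r.eval x ^ 2) = 0 := by
    have : (∫ x in c..d, (d - x) * r.eval x ^ 2)
        = - ∫ x in c..d, (x - d) * r.eval x * r.eval x := by
      rw [← intervalIntegral.integral_neg]
      congr 1
      funext x
      ring
    rw [this, h, neg_zero]
  exact absurd (radau_aux hcd r h2) hr0

private lemma radau_momsum {k : ℕ} {c d : ℝ} (hcd : c ≤ d) (f : ℝ → ℝ)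
    (hf : ContinuousOn f (Set.Icc c d)) (q : Polynomial ℝ) (hq : q.natDegree < k) :
    (∫ x in c..d, f x * q.eval x)
      = ∑ i ∈ Finset.range k, q.coeff i * ∫ x in c..d, f x * x ^ i := by
  have huIcc : Set.uIcc c d = Set.Icc c d := Set.uIcc_of_le hcd
  have hint : ∀ i : ℕ, IntervalIntegrable (fun x => f x * x ^ i) volume c d := fun i => by
    apply ContinuousOn.intervalIntegrable
    rw [huIcc]
    exact hf.mul (continuous_pow i).continuousOn
  have step1 : (∫ x in c..d, f x * q.eval x)
      = ∫ x in c..d, ∑ i ∈ Finset.range k, q.coeff i * (f x * x ^ i) := by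
    apply intervalIntegral.integral_congr
    intro x _
    show f x * q.eval x = ∑ i ∈ Finset.range k, q.coeff i * (f x * x ^ i)
    rw [Polynomial.eval_eq_sum_range' hq x, Finset.mul_sum]
    apply Finset.sum_congr rfl
    intro i _
    ring
  rw [step1, intervalIntegral.integral_finset_sum (fun i _ => (hint i).const_mul _)]
  exact Finset.sum_congr rfl fun i _ => intervalIntegral.integral_const_mul _ _

/-- Well-posedness of the Gauss–Radau projection on an interval: for `k ≥ 1` and a
continuous `u` on `[c, d]`, there is a unique polynomial `p` of degree at most `k`
matching the moments of `u` against all polynomials of degree at most `k − 1` and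
satisfying `p(d) = u(d)`. -/
theorem statement5 (k : ℕ) (hk : 1 ≤ k) (c d : ℝ) (hcd : c < d)
    (u : ℝ → ℝ) (hu : ContinuousOn u (Set.Icc c d)) :
    ∃! p : Polynomial ℝ, p.natDegree ≤ k ∧
      (∀ q : Polynomial ℝ, q.natDegree ≤ k - 1 →
        ∫ x in c..d, p.eval x * q.eval x = ∫ x in c..d, u x * q.eval x) ∧
      p.eval d = u d := by
  have huIcc : Set.uIcc c d = Set.Icc c d := Set.uIcc_of_le hcd.le
  have huint : ∀ i : ℕ, IntervalIntegrable (fun x => u x * x ^ i) volume c d := fun i => by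
    apply ContinuousOn.intervalIntegrable
    rw [huIcc]
    exact hu.mul (continuous_pow i).continuousOn
  -- degree facts
  have natdeg_of_mem : ∀ p : Polynomial ℝ, p ∈ Polynomial.degreeLT ℝ (k + 1) →
      p.natDegree ≤ k := by
    intro p hp
    by_cases hp0 : p = 0
    · simp [hp0]
    · have := Polynomial.mem_degreeLT.1 hp
      have := (Polynomial.natDegree_lt_iff_degree_lt hp0).2 this
      omega
  -- the endomorphism of ℝ^{k+1}
  set E := Polynomial.degreeLTEquiv ℝ (k + 1) with hE
  set M : (Fin (k + 1) → ℝ) →ₗ[ℝ] (Fin (k + 1) → ℝ) :=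
    ((radauL k c d).comp (Polynomial.degreeLT ℝ (k + 1)).subtype).comp
      (E.symm : (Fin (k + 1) → ℝ) →ₗ[ℝ] Polynomial.degreeLT ℝ (k + 1)) with hM
  -- Components of M
  have hMcomp : ∀ (v : Fin (k + 1) → ℝ) (i : Fin (k + 1)),
      M v i = if (i : ℕ) < k
        then ∫ x in c..d, (E.symm v : Polynomial ℝ).eval x * x ^ (i : ℕ)
        else (E.symm v : Polynomial ℝ).eval d := by
    intro v i
    simp only [hM, LinearMap.comp_apply, LinearMap.coe_comp, Submodule.coe_subtype,
      radauL, LinearMap.pi_apply, LinearEquiv.coe_coe]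
    by_cases h : (i : ℕ) < k
    · rw [if_pos h, if_pos h]; rfl
    · rw [if_neg h, if_neg h]; rfl
  -- Injectivity of M
  have hMinj : Function.Injective M := by
    rw [← LinearMap.ker_eq_bot, LinearMap.ker_eq_bot']
    intro v hv
    set p : Polynomial ℝ := (E.symm v : Polynomial ℝ) with hpdef
    have hpmem : p ∈ Polynomial.degreeLT ℝ (k + 1) := (E.symm v).2
    have hdeg : p.natDegree ≤ k := natdeg_of_mem p hpmem
    have hmom0 : ∀ i : ℕ, i < k → (∫ x in c..d, p.eval x * x ^ i) = 0 := by
      intro i hi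
      have := congrFun hv ⟨i, by omega⟩
      rw [hMcomp] at this
      simpa [hi] using this
    have hd0 : p.eval d = 0 := by
      have := congrFun hv ⟨k, by omega⟩
      rw [hMcomp] at this
      simpa using this
    have hp0 : p = 0 := by
      apply radau_unique hk hcd p hdeg _ hd0
      intro q hq
      have hqk : q.natDegree < k := by omega
      rw [radau_momsum hcd.le (fun x => p.eval x) p.continuous.continuousOn q hqk]
      exact Finset.sum_eq_zero fun i hi => by
        rw [hmom0 i (Finset.mem_range.1 hi), mul_zero]
    have hz : E.symm v = 0 := ZeroMemClass.coe_eq_zero.mp hp0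
    have := congrArg E hz
    simpa using this
  -- Surjectivity
  have hMsurj : Function.Surjective M := (LinearMap.injective_iff_surjective).1 hMinj
  -- target vector
  set b : Fin (k + 1) → ℝ :=
    fun i => if (i : ℕ) < k then ∫ x in c..d, u x * x ^ (i : ℕ) else u d with hb
  obtain ⟨v, hv⟩ := hMsurj b
  set p : Polynomial ℝ := (E.symm v : Polynomial ℝ) with hpdef
  have hpmem : p ∈ Polynomial.degreeLT ℝ (k + 1) := (E.symm v).2
  have hdeg : p.natDegree ≤ k := natdeg_of_mem p hpmem
  have hmomp : ∀ i : ℕ, i < k →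
      (∫ x in c..d, p.eval x * x ^ i) = ∫ x in c..d, u x * x ^ i := by
    intro i hi
    have := congrFun hv ⟨i, by omega⟩
    rw [hMcomp] at this
    simpa [hb, hi] using this
  have hvd : p.eval d = u d := by
    have := congrFun hv ⟨k, by omega⟩
    rw [hMcomp] at this
    simpa [hb] using this
  have hmomq : ∀ q : Polynomial ℝ, q.natDegree ≤ k - 1 →
      (∫ x in c..d, p.eval x * q.eval x) = ∫ x in c..d, u x * q.eval x := by
    intro q hq
    have hqk : q.natDegree < k := by omega
    rw [radau_momsum hcd.le (fun x => p.eval x) p.continuous.continuousOn q hqk,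
      radau_momsum hcd.le u hu q hqk]
    exact Finset.sum_congr rfl fun i hi => by
      rw [hmomp i (Finset.mem_range.1 hi)]
  refine ⟨p, ⟨hdeg, hmomq, hvd⟩, ?_⟩
  -- uniqueness
  rintro p' ⟨hdeg', hmom', hvd'⟩
  have hsdeg : (p' - p).natDegree ≤ k :=
    le_trans (Polynomial.natDegree_sub_le p' p) (max_le hdeg' hdeg)
  have hsmom : ∀ q : Polynomial ℝ, q.natDegree ≤ k - 1 →
      (∫ x in c..d, (p' - p).eval x * q.eval x) = 0 := by
    intro q hq
    have hint1 : IntervalIntegrable (fun x => p'.eval x * q.eval x) volume c d :=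
      (p'.continuous.mul q.continuous).intervalIntegrable _ _
    have hint2 : IntervalIntegrable (fun x => p.eval x * q.eval x) volume c d :=
      (p.continuous.mul q.continuous).intervalIntegrable _ _
    have : (∫ x in c..d, (p' - p).eval x * q.eval x)
        = (∫ x in c..d, p'.eval x * q.eval x) - ∫ x in c..d, p.eval x * q.eval x := by
      rw [← intervalIntegral.integral_sub hint1 hint2]
      apply intervalIntegral.integral_congr
      intro x _
      simp [Polynomial.eval_sub]
      ring
    rw [this, hmom' q hq, hmomq q hq, sub_self]
  have hsd : (p' - p).eval d = 0 := by
    simp [Polynomial.eval_sub, hvd, hvd']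
  have := radau_unique hk hcd (p' - p) hsdeg hsmom hsd
  exact sub_eq_zero.1 this
end

section
/- Let k ≥ 1 and σ ≥ k+1, let β > 0, and let N ≥ 4 be an even integer with ε ≤ N^{−1} and τ = (σ ε / β) ln N ≤ 1/2. Consider the Shishkin mesh x_i = 2(1−τ)i/N for 0 ≤ i ≤ N/2 and x_i = 1−τ + 2τ(i − N/2)/N for N/2 < i ≤ N, with elements I_i = [x_{i−1}, x_i]. Let u ∈ C^{k+2}([0,1]) admit a decomposition u = S + E with |S^{(m)}(x)| ≤ C_d and |E^{(m)}(x)| ≤ C_d ε^{−m} e^{−β(1−x)/ε} for all 0 ≤ m ≤ k+2 and x ∈ [0,1], let P⁻u be its elementwise Gauss–Radau projection, and set η = P⁻u − u on [0, 1−τ]. Then there is a constant C depending only on k, β, σ, C_d (and not on ε or N) such that for all 0 ≤ i ≤ N/2 − 1, {η′(x_i)}² ≤ C ( N^{−2k} + N^{−(k+1/2)} ε^{−3/2} N^{−σ} + ε^{−2} N^{−2σ} ), where {η′(x_i)} = (η′(x_i^+) + η′(x_i^−))/2 for 1 ≤ i ≤ N/2−1 (one-sided derivative values from the adjacent elements)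 and {η′(x_0)} = η′(x_0^+). -/
/-!
On a coarse element `[a, b]` of length `h = 2(1 - τ)/N ∈ [1/N, 2/N]`, compare the Gauss–Radau
projection `P` of `u = S + E` with the degree-`k` Taylor polynomial `T` of `S`: `P - T` is the
projection of `u - T`, and `|u - T| ≤ Cd h^(k+1) + sup |E|` on the element. On `[0, 1]` the
Gauss–Radau data (the first `k` moments and the value at `1`) determine a polynomial of degree
`≤ k`, so by finite-dimensionality they bound its derivative; rescaling gives
`|(P - T)'| ≲ h^k + sup |E| / h`. On the coarse region `1 - x ≥ τ`, so
`e^{-β(1-x)/ε} ≤ N^{-σ}` and `|E|, ε |E'| ≤ Cd N^{-σ}`. Hence `|η'| ≲ N^{-k} + ε^{-1} N^{-σ}`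
on both elements adjacent to a coarse node, and squaring gives the bound.
-/

open Set Polynomial intervalIntegral
open MeasureTheory (volume)

noncomputable def radauData (k : ℕ) : ℝ[X] →ₗ[ℝ] (Fin k → ℝ) × ℝ where
  toFun p := (fun j => ∫ s in (0:ℝ)..1, p.eval s * s ^ (j : ℕ), p.eval 1)
  map_add' p q := by
    have hint (r : ℝ[X]) (j : ℕ) : IntervalIntegrable (fun s => r.eval s * s ^ j) volume 0 1 :=
      (r.continuous.mul (continuous_pow j)).intervalIntegrable _ _
    ext j
    · simp [add_mul, integral_add (hint p j) (hint q j)]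
    · simp
  map_smul' c p := by
    ext j
    · simp [mul_assoc]
    · simp

theorem integral_eval_mul_eq_zero_of_moments {k : ℕ} {p q : ℝ[X]} (hq : q.natDegree < k)
    (hp : ∀ j < k, ∫ s in (0:ℝ)..1, p.eval s * s ^ j = 0) :
    ∫ s in (0:ℝ)..1, p.eval s * q.eval s = 0 := by
  have hint (j : ℕ) : IntervalIntegrable (fun s => q.coeff j * (p.eval s * s ^ j)) volume 0 1 :=
    ((p.continuous.mul (continuous_pow j)).const_mul _).intervalIntegrable _ _
  simp_rw [eval_eq_sum_range' hq, Finset.mul_sum, mul_left_comm (p.eval _)]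
  rw [integral_finsetSum fun j _ => hint j]
  exact Finset.sum_eq_zero fun j hj => by
    rw [intervalIntegral.integral_const_mul, hp j (Finset.mem_range.1 hj), mul_zero]

theorem eq_zero_of_radauData_eq_zero {k : ℕ} {p : ℝ[X]} (hp : p.natDegree ≤ k)
    (h : radauData k p = 0) : p = 0 := by
  have hmom : ∀ j < k, ∫ s in (0:ℝ)..1, p.eval s * s ^ j = 0 := fun j hj =>
    congrFun (congrArg Prod.fst h) ⟨j, hj⟩
  obtain ⟨r, rfl⟩ : X - C 1 ∣ p := dvd_iff_isRoot.2 (congrArg Prod.snd h)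
  -- `p = (X - 1) r` with `deg r < k`, so `0 = ∫ p r = -∫ (1 - s) r(s)²`, forcing `r = 0`.
  by_contra hp0
  have hr : r ≠ 0 := by rintro rfl; simp at hp0
  have hdeg : r.natDegree < k := by
    rw [natDegree_mul (X_sub_C_ne_zero 1) hr, natDegree_X_sub_C] at hp; omega
  have hpos : 0 < ∫ s in (0:ℝ)..1, (1 - s) * r.eval s ^ 2 := by
    obtain ⟨c, hc, hrc⟩ := (Ico_infinite (zero_lt_one' ℝ)).exists_notMem_finite
      (finite_setOfPred_isRoot hr)
    refine integral_pos zero_lt_one (by fun_prop) (fun s hs => ?_)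
      ⟨c, Ico_subset_Icc_self hc, ?_⟩
    · nlinarith [hs.2, sq_nonneg (r.eval s)]
    · have : r.eval c ≠ 0 := hrc
      nlinarith [hc.2, sq_pos_of_ne_zero this]
  have hzero := integral_eval_mul_eq_zero_of_moments hdeg hmom
  have : ∫ s in (0:ℝ)..1, ((X - C 1) * r).eval s * r.eval s
      = -∫ s in (0:ℝ)..1, (1 - s) * r.eval s ^ 2 := by
    rw [← integral_neg]; congr 1; ext s; simp; ring
  linarith

theorem abs_eval_le_of_abs_coeff_le {p : ℝ[X]} {n : ℕ} {B s : ℝ} (hp : p.natDegree < n)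
    (hB : ∀ i < n, |p.coeff i| ≤ B) (hs : |s| ≤ 1) : |p.eval s| ≤ n * B := by
  rw [eval_eq_sum_range' hp]
  calc |∑ i ∈ Finset.range n, p.coeff i * s ^ i|
      ≤ ∑ i ∈ Finset.range n, |p.coeff i * s ^ i| := Finset.abs_sum_le_sum_abs _ _
    _ ≤ ∑ _i ∈ Finset.range n, B := Finset.sum_le_sum fun i hi => by
        rw [abs_mul, abs_pow]
        exact (mul_le_of_le_one_right (abs_nonneg _) (pow_le_one₀ (abs_nonneg s) hs)).trans
          (hB i (Finset.mem_range.1 hi))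
    _ = n * B := by simp

theorem mem_degreeLT_succ_iff {R : Type*} [Semiring R] {n : ℕ} {p : R[X]} :
    p ∈ degreeLT R (n + 1) ↔ p.natDegree ≤ n :=
  ⟨fun hp => natDegree_le_iff_degree_le.2 (Order.le_of_lt_succ (mem_degreeLT.1 hp)),
    fun hp => mem_degreeLT.2 ((degree_le_of_natDegree_le hp).trans_lt (mod_cast n.lt_succ_self))⟩

theorem exists_abs_coeff_le_mul_norm_radauData (k : ℕ) :
    ∃ K, 0 ≤ K ∧
      ∀ p : ℝ[X], p.natDegree ≤ k → ∀ i, |p.coeff i| ≤ K * ‖radauData k p‖ := by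
  let Φ := radauData k ∘ₗ (degreeLT ℝ (k + 1)).subtype ∘ₗ
    (degreeLTEquiv ℝ (k + 1)).symm.toLinearMap
  have hΦ : LinearMap.ker Φ = ⊥ := by
    refine LinearMap.ker_eq_bot'.2 fun c hc => ?_
    set p := (degreeLTEquiv ℝ (k + 1)).symm c with hpc
    have : p = 0 :=
      Subtype.ext (eq_zero_of_radauData_eq_zero (mem_degreeLT_succ_iff.1 p.2) hc)
    simpa [hpc] using this
  obtain ⟨K, -, hK⟩ := Φ.exists_antilipschitzWith hΦ
  refine ⟨K, K.2, fun p hp i => ?_⟩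
  set c := degreeLTEquiv ℝ (k + 1) ⟨p, mem_degreeLT_succ_iff.2 hp⟩
  have hc : ‖c‖ ≤ K * ‖radauData k p‖ := by
    simpa [Φ, c] using ZeroHomClass.bound_of_antilipschitz Φ hK c
  rcases lt_or_ge i (k + 1) with hi | hi
  · exact (norm_le_pi_norm c ⟨i, hi⟩).trans hc
  · rw [coeff_eq_zero_of_natDegree_lt (by omega), abs_zero]
    exact hc.trans' (norm_nonneg _)

def IsRadauDerivBound (k : ℕ) (K : ℝ) : Prop :=
  ∀ (p : ℝ[X]) (M : ℝ), p.natDegree ≤ k →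
    (∀ j < k, |∫ s in (0:ℝ)..1, p.eval s * s ^ j| ≤ M) → |p.eval 1| ≤ M →
    ∀ s ∈ Icc (0:ℝ) 1, |p.derivative.eval s| ≤ K * M

theorem exists_isRadauDerivBound (k : ℕ) : ∃ K, 0 ≤ K ∧ IsRadauDerivBound k K := by
  obtain ⟨K, hK0, hK⟩ := exists_abs_coeff_le_mul_norm_radauData k
  refine ⟨(k + 1) ^ 2 * K, by positivity, fun p M hp hmom hend s hs => ?_⟩
  have hdata : ‖radauData k p‖ ≤ M := by
    rw [Prod.norm_def, max_le_iff, pi_norm_le_iff_of_nonneg ((abs_nonneg _).trans hend)]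
    exact ⟨fun j => hmom j j.2, hend⟩
  have hcoeff (i : ℕ) : |p.coeff i| ≤ K * M := (hK p hp i).trans (by gcongr)
  have hcoeff' : ∀ i < k + 1, |p.derivative.coeff i| ≤ (k + 1) * (K * M) := fun i hi => by
    rw [coeff_derivative, abs_mul, mul_comm]
    have : |(i : ℝ) + 1| ≤ k + 1 := by
      rw [abs_of_nonneg (by positivity)]; exact_mod_cast hi
    exact mul_le_mul this (hcoeff _) (abs_nonneg _) (by positivity)
  calc |p.derivative.eval s| ≤ (k + 1 : ℕ) * ((k + 1) * (K * M)) :=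
        abs_eval_le_of_abs_coeff_le ((natDegree_derivative_le p).trans_lt (by omega)) hcoeff'
          (abs_le.2 ⟨by linarith [hs.1], hs.2⟩)
    _ = (k + 1) ^ 2 * K * M := by push_cast; ring

theorem abs_integral_eval_affine_mul_pow_le {k j : ℕ} (hj : j < k) {a b M : ℝ} (hab : a < b)
    {p : ℝ[X]} {w : ℝ → ℝ}
    (hmom : ∀ q : ℝ[X], q.natDegree ≤ k - 1 →
      ∫ t in a..b, p.eval t * q.eval t = ∫ t in a..b, w t * q.eval t)
    (hw : ∀ t ∈ Icc a b, |w t| ≤ M) :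
    |∫ s in (0:ℝ)..1, p.eval (a + (b - a) * s) * s ^ j| ≤ M := by
  set h := b - a with hh
  have hh0 : 0 < h := sub_pos.2 hab
  set q : ℝ[X] := (C h⁻¹ * (X - C a)) ^ j
  have hq (t : ℝ) : q.eval t = (h⁻¹ * (t - a)) ^ j := by simp [q]
  have hqdeg : q.natDegree ≤ k - 1 :=
    natDegree_pow_le.trans ((Nat.mul_le_mul_left j
      ((natDegree_C_mul_le _ _).trans (natDegree_X_sub_C a).le)).trans (by omega))
  have hscale : ∫ s in (0:ℝ)..1, p.eval (a + h * s) * s ^ j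
      = h⁻¹ * ∫ t in a..b, p.eval t * q.eval t := by
    have := integral_comp_add_mul (fun t => p.eval t * q.eval t) hh0.ne' a (a := 0) (b := 1)
    rw [mul_zero, add_zero, mul_one, show a + h = b by simp [hh], smul_eq_mul] at this
    rw [← this]
    congr 1; ext s
    rw [hq, add_sub_cancel_left, inv_mul_cancel_left₀ hh0.ne']
  have hwq : ∀ t ∈ uIoc a b, ‖w t * q.eval t‖ ≤ M := by
    intro t ht
    rw [uIoc_of_le hab.le] at ht
    have h0 : 0 ≤ h⁻¹ * (t - a) := by have := ht.1; positivity
    have h1 : h⁻¹ * (t - a) ≤ 1 := by rw [inv_mul_le_one₀ hh0]; linarith [ht.2]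
    rw [Real.norm_eq_abs, abs_mul, hq, abs_pow, abs_of_nonneg h0]
    exact (mul_le_of_le_one_right (abs_nonneg _) (pow_le_one₀ h0 h1)).trans
      (hw t (Ioc_subset_Icc_self ht))
  have := norm_integral_le_of_norm_le_const hwq
  rw [Real.norm_eq_abs, abs_of_pos hh0] at this
  rw [hscale, hmom q hqdeg, abs_mul, abs_inv, abs_of_pos hh0]
  calc h⁻¹ * |∫ t in a..b, w t * q.eval t| ≤ h⁻¹ * (M * h) := by gcongr
    _ = M := by field_simp

theorem abs_derivative_eval_le_of_gaussRadau {k : ℕ} {K : ℝ} (hK : IsRadauDerivBound k K)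
    {a b M : ℝ} (hab : a < b) {p : ℝ[X]} (hp : p.natDegree ≤ k) {w : ℝ → ℝ}
    (hmom : ∀ q : ℝ[X], q.natDegree ≤ k - 1 →
      ∫ t in a..b, p.eval t * q.eval t = ∫ t in a..b, w t * q.eval t)
    (hend : p.eval b = w b) (hw : ∀ t ∈ Icc a b, |w t| ≤ M) {x : ℝ} (hx : x ∈ Icc a b) :
    |p.derivative.eval x| ≤ K * M / (b - a) := by
  set h := b - a with hh
  have hh0 : 0 < h := sub_pos.2 hab
  set P := p.comp (C a + C h * X)
  have hPeval (s : ℝ) : P.eval s = p.eval (a + h * s) := by simp [P]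
  have hPdeg : P.natDegree ≤ k := by
    have : (C a + C h * X : ℝ[X]).natDegree ≤ 1 :=
      (natDegree_add_le _ _).trans
        (max_le (by simp) ((natDegree_C_mul_le _ _).trans natDegree_X_le))
    exact natDegree_comp_le.trans (by nlinarith)
  have hPend : |P.eval 1| ≤ M := by
    rw [hPeval, mul_one, show a + h = b by simp [hh], hend]
    exact hw b ⟨hab.le, le_rfl⟩
  have hs : (x - a) / h ∈ Icc (0:ℝ) 1 :=
    ⟨div_nonneg (by linarith [hx.1]) hh0.le, (div_le_one hh0).2 (by linarith [hx.2])⟩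
  have := hK P M hPdeg (fun j hj => by
    simpa only [hPeval] using abs_integral_eval_affine_mul_pow_le hj hab hmom hw) hPend _ hs
  have hPder : P.derivative.eval ((x - a) / h) = h * p.derivative.eval x := by
    simp only [P, derivative_comp, eval_mul, eval_comp]
    simp [mul_div_cancel₀ _ hh0.ne']
  rw [hPder, abs_mul, abs_of_pos hh0] at this
  rw [le_div_iff₀ hh0]; linarith

noncomputable def taylorPoly (f : ℝ → ℝ) (s : Set ℝ) (a : ℝ) (n : ℕ) : ℝ[X] :=
  ∑ m ∈ Finset.range (n + 1), C (taylorCoeffWithin f m s a) * (X - C a) ^ m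

theorem natDegree_taylorPoly_le (f : ℝ → ℝ) (s : Set ℝ) (a : ℝ) (n : ℕ) :
    (taylorPoly f s a n).natDegree ≤ n :=
  natDegree_sum_le_of_forall_le _ _ fun m hm => (natDegree_C_mul_le _ _).trans <|
    natDegree_pow_le.trans <| by
      rw [natDegree_X_sub_C, mul_one]; exact Nat.lt_succ_iff.1 (Finset.mem_range.1 hm)

theorem eval_taylorPoly (f : ℝ → ℝ) (s : Set ℝ) (a : ℝ) (n : ℕ) (x : ℝ) :
    (taylorPoly f s a n).eval x = taylorWithinEval f n s a x := by
  simp [taylorPoly, taylor_within_apply, eval_finsetSum, taylorCoeffWithin, mul_comm, mul_assoc]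

theorem derivative_taylorPoly_succ (f : ℝ → ℝ) (s : Set ℝ) (a : ℝ) (n : ℕ) :
    (taylorPoly f s a (n + 1)).derivative = taylorPoly (derivWithin f s) s a n := by
  rw [taylorPoly, derivative_sum, Finset.sum_range_succ', taylorPoly]
  simp only [derivative_C_mul, derivative_X_sub_C_pow]
  refine (add_eq_left.2 (by simp)).trans (Finset.sum_congr rfl fun m _ => ?_)
  rw [taylorCoeffWithin, taylorCoeffWithin, iteratedDerivWithin_succ', Nat.factorial_succ]
  rw [Nat.add_sub_cancel, ← mul_assoc, ← C_mul, smul_eq_mul, smul_eq_mul]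
  congr 2
  push_cast
  field_simp

theorem abs_sub_taylorWithinEval_le {f : ℝ → ℝ} {a b C x : ℝ} {n : ℕ} (hab : a ≤ b)
    (hf : ContDiffOn ℝ (n + 1 : ℕ) f (Icc a b))
    (hC : ∀ y ∈ Icc a b, |iteratedDerivWithin (n + 1) f (Icc a b) y| ≤ C)
    (hx : x ∈ Icc a b) :
    |f x - taylorWithinEval f n (Icc a b) a x| ≤ C * (b - a) ^ (n + 1) := by
  have hC0 : 0 ≤ C := (abs_nonneg _).trans (hC a ⟨le_rfl, hab⟩)
  have hxa : 0 ≤ x - a := sub_nonneg.2 hx.1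
  calc |f x - taylorWithinEval f n (Icc a b) a x| ≤ C * (x - a) ^ (n + 1) / n.factorial :=
        taylor_mean_remainder_bound hab (mod_cast hf) hx hC
    _ ≤ C * (x - a) ^ (n + 1) := div_le_self (by positivity) (mod_cast n.factorial_pos)
    _ ≤ C * (b - a) ^ (n + 1) := by gcongr; exact hx.2

theorem abs_sub_taylorPoly_le {f : ℝ → ℝ} {a b C x : ℝ} {n : ℕ} (hab : a < b)
    (hf : ContDiffOn ℝ (n + 2 : ℕ) f (Icc a b))
    (hC : ∀ y ∈ Icc a b, |iteratedDerivWithin (n + 2) f (Icc a b) y| ≤ C)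
    (hx : x ∈ Icc a b) :
    |f x - (taylorPoly f (Icc a b) a (n + 1)).eval x| ≤ C * (b - a) ^ (n + 2) ∧
      |derivWithin f (Icc a b) x - (taylorPoly f (Icc a b) a (n + 1)).derivative.eval x|
        ≤ C * (b - a) ^ (n + 1) := by
  refine ⟨eval_taylorPoly .. ▸ abs_sub_taylorWithinEval_le hab.le hf hC hx, ?_⟩
  rw [derivative_taylorPoly_succ, eval_taylorPoly]
  refine abs_sub_taylorWithinEval_le hab.le (hf.derivWithin (uniqueDiffOn_Icc hab) ?_)
    (fun y hy => ?_) hx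
  · exact_mod_cast le_rfl
  · rw [← iteratedDerivWithin_succ']; exact hC y hy

theorem iteratedDerivWithin_subset {𝕜 F : Type*} [NontriviallyNormedField 𝕜]
    [NormedAddCommGroup F] [NormedSpace 𝕜 F] {n : ℕ} {f : 𝕜 → F} {s t : Set 𝕜} {x : 𝕜}
    (st : s ⊆ t) (hs : UniqueDiffOn 𝕜 s) (ht : UniqueDiffOn 𝕜 t) (h : ContDiffOn 𝕜 n f t)
    (hx : x ∈ s) : iteratedDerivWithin n f s x = iteratedDerivWithin n f t x := by
  simp only [iteratedDerivWithin, iteratedFDerivWithin_subset st hs ht h hx]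

theorem abs_derivative_eval_sub_derivWithin_le {k : ℕ} {K : ℝ} (hK : IsRadauDerivBound k K)
    (hk : 1 ≤ k) {a b Cd ME : ℝ} (hab : a < b) {S E u : ℝ → ℝ}
    (hS : ContDiffOn ℝ (k + 1 : ℕ) S (Icc a b))
    (hSb : ∀ t ∈ Icc a b, |iteratedDerivWithin (k + 1) S (Icc a b) t| ≤ Cd)
    (hE : DifferentiableOn ℝ E (Icc a b)) (hEb : ∀ t ∈ Icc a b, |E t| ≤ ME)
    (hu : ∀ t ∈ Icc a b, u t = S t + E t) {P : ℝ[X]} (hP : P.natDegree ≤ k)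
    (hmom : ∀ q : ℝ[X], q.natDegree ≤ k - 1 →
      ∫ t in a..b, P.eval t * q.eval t = ∫ t in a..b, u t * q.eval t)
    (hend : P.eval b = u b) {x : ℝ} (hx : x ∈ Icc a b) :
    |P.derivative.eval x - derivWithin u (Icc a b) x|
      ≤ (K + 1) * Cd * (b - a) ^ k + K * ME / (b - a) + |derivWithin E (Icc a b) x| := by
  obtain ⟨n, rfl⟩ : ∃ n, k = n + 1 := ⟨k - 1, by omega⟩
  -- `P - T` is the Gauss–Radau projection of `u - T`, which is small on `[a, b]`.
  set T := taylorPoly S (Icc a b) a (n + 1)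
  have hT (y) (hy : y ∈ Icc a b) := abs_sub_taylorPoly_le hab hS hSb hy
  have hw : ∀ t ∈ Icc a b, |u t - T.eval t| ≤ Cd * (b - a) ^ (n + 2) + ME := fun t ht => by
    rw [hu t ht, add_sub_right_comm]
    exact (abs_add_le _ _).trans (add_le_add (hT t ht).1 (hEb t ht))
  have hint (f : ℝ → ℝ) (hf : ContinuousOn f (Icc a b)) (q : ℝ[X]) :
      IntervalIntegrable (fun t => f t * q.eval t) volume a b :=
    (hf.mul q.continuous.continuousOn).intervalIntegrable_of_Icc hab.le
  have hu_cont : ContinuousOn u (Icc a b) :=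
    (hS.continuousOn.add hE.continuousOn).congr hu
  have hPT := abs_derivative_eval_le_of_gaussRadau hK hab (p := P - T)
    (w := fun t => u t - T.eval t)
    ((natDegree_sub_le _ _).trans (max_le hP (natDegree_taylorPoly_le ..)))
    (fun q hq => by
      simp only [eval_sub, sub_mul]
      rw [integral_sub (hint _ P.continuous.continuousOn q) (hint _ T.continuous.continuousOn q),
        integral_sub (hint _ hu_cont q) (hint _ T.continuous.continuousOn q), hmom q hq])
    (by simp [hend]) hw hx
  have hu' : derivWithin u (Icc a b) x = derivWithin S (Icc a b) x + derivWithin E (Icc a b) x := by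
    rw [derivWithin_congr hu (hu x hx), derivWithin_fun_add
      (hS.differentiableOn (by simp) x hx) (hE x hx)]
  have hsplit : P.derivative.eval x - derivWithin u (Icc a b) x = (P - T).derivative.eval x
      + (T.derivative.eval x - derivWithin S (Icc a b) x) - derivWithin E (Icc a b) x := by
    rw [hu']; simp only [derivative_sub, eval_sub]; ring
  rw [hsplit]
  calc _ ≤ |(P - T).derivative.eval x| + |T.derivative.eval x - derivWithin S (Icc a b) x|
        + |derivWithin E (Icc a b) x| := (abs_sub _ _).trans (by gcongr; exact abs_add_le _ _)
    _ ≤ K * (Cd * (b - a) ^ (n + 2) + ME) / (b - a) + Cd * (b - a) ^ (n + 1)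
        + |derivWithin E (Icc a b) x| := by
        gcongr; rw [abs_sub_comm]; exact (hT x hx).2
    _ = _ := by
        have : b - a ≠ 0 := (sub_pos.2 hab).ne'
        field_simp; ring

theorem exp_neg_div_le_rpow_neg {β σ ε τ t N : ℝ} (hβ : 0 < β) (hε : 0 < ε) (hN : 0 < N)
    (hτ : τ = σ * ε / β * Real.log N) (ht : t ≤ 1 - τ) :
    Real.exp (-β * (1 - t) / ε) ≤ N ^ (-σ) := by
  have hlog : Real.log N * -σ = -β * τ / ε := by rw [hτ]; field_simp
  rw [Real.rpow_def_of_pos hN, hlog, Real.exp_le_exp]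
  exact div_le_div_of_nonneg_right (by nlinarith) hε.le

theorem coarse_mesh_element {N j : ℕ} {τ : ℝ} {x : ℕ → ℝ}
    (hx : ∀ i ≤ N / 2, x i = 2 * (1 - τ) * i / N) (hτ : τ ≤ 1) (hj1 : 1 ≤ j)
    (hj2 : j ≤ N / 2) :
    0 ≤ x (j - 1) ∧ x j ≤ 1 - τ ∧ x j - x (j - 1) = 2 * (1 - τ) / N := by
  have hN : (0:ℝ) < N := by norm_cast; omega
  have h2j : 2 * (j : ℝ) ≤ N := by norm_cast; omega
  rw [hx j hj2, hx (j - 1) (by omega), Nat.cast_sub hj1, Nat.cast_one]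
  refine ⟨by have : (1:ℝ) ≤ j := mod_cast hj1; positivity, ?_, by ring⟩
  rw [div_le_iff₀ hN]; nlinarith

theorem abs_derivative_eval_sub_derivWithin_Icc_le {k : ℕ} {K : ℝ}
    (hK : IsRadauDerivBound k K) (hk : 1 ≤ k) {a b Cd ME : ℝ} (ha : 0 ≤ a) (hab : a < b)
    (hb : b ≤ 1) {S E u : ℝ → ℝ} (hS : ContDiffOn ℝ (k + 1 : ℕ) S (Icc 0 1))
    (hSb : ∀ t ∈ Icc (0:ℝ) 1, |iteratedDerivWithin (k + 1) S (Icc 0 1) t| ≤ Cd)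
    (hE : DifferentiableOn ℝ E (Icc 0 1)) (hEb : ∀ t ∈ Icc a b, |E t| ≤ ME)
    (hu : ∀ t ∈ Icc (0:ℝ) 1, u t = S t + E t) {P : ℝ[X]} (hP : P.natDegree ≤ k)
    (hmom : ∀ q : ℝ[X], q.natDegree ≤ k - 1 →
      ∫ t in a..b, P.eval t * q.eval t = ∫ t in a..b, u t * q.eval t)
    (hend : P.eval b = u b) {x : ℝ} (hx : x ∈ Icc a b) :
    |P.derivative.eval x - derivWithin u (Icc 0 1) x|
      ≤ (K + 1) * Cd * (b - a) ^ k + K * ME / (b - a) + |derivWithin E (Icc 0 1) x| := by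
  have hsub : Icc a b ⊆ Icc (0:ℝ) 1 := Icc_subset_Icc ha hb
  have hderiv {f : ℝ → ℝ} (hf : DifferentiableOn ℝ f (Icc 0 1)) :
      derivWithin f (Icc a b) x = derivWithin f (Icc 0 1) x :=
    derivWithin_subset hsub (uniqueDiffOn_Icc hab x hx) (hf x (hsub hx))
  have hud : DifferentiableOn ℝ u (Icc 0 1) :=
    ((hS.differentiableOn (by simp)).add hE).congr hu
  have hSb' (t) (ht : t ∈ Icc a b) : |iteratedDerivWithin (k + 1) S (Icc a b) t| ≤ Cd := by
    rw [iteratedDerivWithin_subset hsub (uniqueDiffOn_Icc hab) (uniqueDiffOn_Icc zero_lt_one) hS ht]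
    exact hSb t (hsub ht)
  rw [← hderiv hud, ← hderiv hE]
  exact abs_derivative_eval_sub_derivWithin_le hK hk hab (hS.mono hsub) hSb' (hE.mono hsub) hEb
    (fun t ht => hu t (hsub ht)) hP hmom hend hx

theorem abs_derivative_eval_sub_derivWithin_le_coarse {k : ℕ} {K : ℝ}
    (hK : IsRadauDerivBound k K) (hK0 : 0 ≤ K) (hk : 1 ≤ k) {β σ Cd ε τ a b : ℝ} {N : ℕ}
    (hβ : 0 < β) (hσ : 0 ≤ σ) (hN : 0 < N) (hε : 0 < ε) (hεN : ε ≤ (N : ℝ)⁻¹)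
    (hτ : τ = σ * ε / β * Real.log N) (hτ1 : τ ≤ 1 / 2)
    (ha : 0 ≤ a) (hb : b ≤ 1 - τ) (hba : b - a = 2 * (1 - τ) / N) {S E u : ℝ → ℝ}
    (hS : ContDiffOn ℝ (k + 1 : ℕ) S (Icc 0 1)) (hE : DifferentiableOn ℝ E (Icc 0 1))
    (hu : ∀ t ∈ Icc (0:ℝ) 1, u t = S t + E t)
    (hSb : ∀ t ∈ Icc (0:ℝ) 1, |iteratedDerivWithin (k + 1) S (Icc 0 1) t| ≤ Cd)
    (hE0 : ∀ t ∈ Icc (0:ℝ) 1, |E t| ≤ Cd * Real.exp (-β * (1 - t) / ε))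
    (hE1 : ∀ t ∈ Icc (0:ℝ) 1,
      |derivWithin E (Icc 0 1) t| ≤ Cd / ε * Real.exp (-β * (1 - t) / ε))
    {P : ℝ[X]} (hP : P.natDegree ≤ k)
    (hmom : ∀ q : ℝ[X], q.natDegree ≤ k - 1 →
      ∫ t in a..b, P.eval t * q.eval t = ∫ t in a..b, u t * q.eval t)
    (hend : P.eval b = u b) {y : ℝ} (hy : y ∈ Icc a b) :
    |P.derivative.eval y - derivWithin u (Icc 0 1) y|
      ≤ (K + 1) * Cd * 2 ^ k * ((N : ℝ) ^ (-(k : ℝ)) + ε⁻¹ * (N : ℝ) ^ (-σ)) := by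
  have hNR : (0:ℝ) < N := mod_cast hN
  have hτ0 : 0 ≤ τ := by
    have : 0 ≤ Real.log N := Real.log_natCast_nonneg N
    rw [hτ]; positivity
  have hτ' : 0 < 1 - τ := by linarith
  have hh0 : 0 < b - a := by rw [hba]; positivity
  have hCd : 0 ≤ Cd := (abs_nonneg _).trans (hSb 0 ⟨le_rfl, zero_le_one⟩)
  have hexp : ∀ t ∈ Icc a b, Real.exp (-β * (1 - t) / ε) ≤ (N : ℝ) ^ (-σ) := fun t ht =>
    exp_neg_div_le_rpow_neg hβ hε hNR hτ (ht.2.trans hb)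
  have hmem (t) (ht : t ∈ Icc a b) : t ∈ Icc (0:ℝ) 1 :=
    ⟨ha.trans ht.1, by linarith [ht.2]⟩
  have key := abs_derivative_eval_sub_derivWithin_Icc_le hK hk ha (sub_pos.1 hh0)
    (by linarith) hS hSb hE (ME := Cd * (N : ℝ) ^ (-σ))
    (fun t ht => (hE0 t (hmem t ht)).trans (by gcongr; exact hexp t ht)) hu hP hmom hend hy
  have hpow : (b - a) ^ k ≤ 2 ^ k * (N : ℝ) ^ (-(k : ℝ)) := by
    rw [Real.rpow_neg hNR.le, Real.rpow_natCast, ← inv_pow, ← mul_pow, hba, ← div_eq_mul_inv]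
    gcongr; linarith
  have hinv : (b - a)⁻¹ ≤ ε⁻¹ := by
    rw [hba, inv_div]
    calc (N : ℝ) / (2 * (1 - τ)) ≤ N := div_le_self hNR.le (by linarith)
      _ ≤ ε⁻¹ := le_inv_of_le_inv₀ hε hεN
  have hlayer : K * (Cd * (N : ℝ) ^ (-σ)) / (b - a) ≤ K * Cd * (ε⁻¹ * (N : ℝ) ^ (-σ)) :=
    calc K * (Cd * (N : ℝ) ^ (-σ)) / (b - a)
        = K * Cd * ((b - a)⁻¹ * (N : ℝ) ^ (-σ)) := by ring
      _ ≤ K * Cd * (ε⁻¹ * (N : ℝ) ^ (-σ)) := by gcongr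
  have hE1y : |derivWithin E (Icc 0 1) y| ≤ Cd * (ε⁻¹ * (N : ℝ) ^ (-σ)) :=
    (hE1 y (hmem y hy)).trans (by rw [div_eq_mul_inv, mul_assoc]; gcongr; exact hexp y hy)
  calc _ ≤ (K + 1) * Cd * (2 ^ k * (N : ℝ) ^ (-(k : ℝ)))
        + K * Cd * (ε⁻¹ * (N : ℝ) ^ (-σ)) + Cd * (ε⁻¹ * (N : ℝ) ^ (-σ)) :=
        key.trans (by gcongr)
    _ ≤ (K + 1) * Cd * 2 ^ k * ((N : ℝ) ^ (-(k : ℝ)) + ε⁻¹ * (N : ℝ) ^ (-σ)) := by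
      have h2k : (1:ℝ) ≤ 2 ^ k := one_le_pow₀ one_le_two
      have : 0 ≤ (K + 1) * Cd * (ε⁻¹ * (N : ℝ) ^ (-σ)) := by positivity
      nlinarith

theorem sq_le_of_abs_le_mul_add {v c N ε σ : ℝ} {k : ℕ} (hN : 0 < N) (hε : 0 < ε)
    (hv : |v| ≤ c * (N ^ (-(k : ℝ)) + ε⁻¹ * N ^ (-σ))) :
    v ^ 2 ≤ 2 * c ^ 2 * (N ^ (-(2 * (k : ℝ))) + ε ^ (-2 : ℝ) * N ^ (-(2 * σ))) := by
  have hsq (z : ℝ) (hz : 0 ≤ z) (r : ℝ) : (z ^ r) ^ 2 = z ^ (2 * r) := by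
    rw [← Real.rpow_natCast, ← Real.rpow_mul hz, mul_comm]; norm_num
  have hA : ((N ^ (-(k : ℝ))) ^ 2 : ℝ) = N ^ (-(2 * (k : ℝ))) := by
    rw [hsq N hN.le, mul_neg]
  have hB : (ε⁻¹ * N ^ (-σ)) ^ 2 = ε ^ (-2 : ℝ) * N ^ (-(2 * σ)) := by
    rw [mul_pow, hsq N hN.le, ← Real.rpow_neg_one, hsq ε hε.le, mul_neg]; norm_num
  rw [← sq_abs, ← hA, ← hB]
  have := pow_le_pow_left₀ (abs_nonneg v) hv 2
  nlinarith [sq_nonneg (N ^ (-(k : ℝ)) - ε⁻¹ * N ^ (-σ))]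

theorem statement11_general (k : ℕ) (hk : 1 ≤ k) (β σ Cd : ℝ)
    (hβ : 0 < β) (hσ : (k : ℝ) + 1 ≤ σ) :
    ∃ C > 0, ∀ (N : ℕ) (ε τ : ℝ) (x : ℕ → ℝ) (u S E : ℝ → ℝ)
      (Pu : ℕ → Polynomial ℝ),
      4 ≤ N → N % 2 = 0 →
      0 < ε → ε ≤ (N : ℝ)⁻¹ →
      τ = σ * ε / β * Real.log N → τ ≤ 1 / 2 →
      (∀ i ≤ N / 2, x i = 2 * (1 - τ) * i / N) →
      (∀ i, N / 2 < i → i ≤ N → x i = 1 - τ + 2 * τ * ((i : ℝ) - (N / 2 : ℕ)) / N) →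
      ContDiffOn ℝ (k + 2 : ℕ) S (Icc 0 1) →
      ContDiffOn ℝ (k + 2 : ℕ) E (Icc 0 1) →
      (∀ t ∈ Icc (0:ℝ) 1, u t = S t + E t) →
      (∀ m ≤ k + 2, ∀ t ∈ Icc (0:ℝ) 1,
        |iteratedDerivWithin m S (Icc 0 1) t| ≤ Cd) →
      (∀ m ≤ k + 2, ∀ t ∈ Icc (0:ℝ) 1,
        |iteratedDerivWithin m E (Icc 0 1) t| ≤
          Cd / ε ^ m * Real.exp (-β * (1 - t) / ε)) →
      (∀ i ∈ Finset.Icc 1 N, (Pu i).natDegree ≤ k) →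
      (∀ i ∈ Finset.Icc 1 N, ∀ q : Polynomial ℝ, q.natDegree ≤ k - 1 →
        (∫ t in (x (i - 1))..(x i), (Pu i).eval t * q.eval t)
          = ∫ t in (x (i - 1))..(x i), u t * q.eval t) →
      (∀ i ∈ Finset.Icc 1 N, (Pu i).eval (x i) = u (x i)) →
      ∀ i ∈ Finset.Icc 0 (N / 2 - 1),
        (if i = 0 then
            ((Pu 1).derivative).eval (x 0) - derivWithin u (Icc 0 1) (x 0)
          else
            (((Pu i).derivative).eval (x i) + ((Pu (i + 1)).derivative).eval (x i)) / 2
              - derivWithin u (Icc 0 1) (x i)) ^ 2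
        ≤ C * ((N : ℝ) ^ (-(2 * (k : ℝ)))
            + (N : ℝ) ^ (-((k : ℝ) + 1 / 2)) * ε ^ ((-3 : ℝ) / 2) * (N : ℝ) ^ (-σ)
            + ε ^ (-2 : ℝ) * (N : ℝ) ^ (-(2 * σ))) := by
  obtain ⟨K, hK0, hK⟩ := exists_isRadauDerivBound k
  set c := (K + 1) * Cd * 2 ^ k
  refine ⟨2 * c ^ 2 + 1, by positivity, ?_⟩
  intro N ε τ x u S E Pu hN4 _ hε hεN hτ hτ1 hx _ hS hE hu hSb hEb hdeg hmom hend i hi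
  have hNR : (0:ℝ) < N := by norm_cast; omega
  have helem : ∀ j, 1 ≤ j → j ≤ N / 2 → ∀ y ∈ ({x (j - 1), x j} : Set ℝ),
      |(Pu j).derivative.eval y - derivWithin u (Icc 0 1) y|
        ≤ c * ((N : ℝ) ^ (-(k : ℝ)) + ε⁻¹ * (N : ℝ) ^ (-σ)) := by
    intro j hj1 hj2 y hy
    obtain ⟨ha, hb, hba⟩ := coarse_mesh_element hx (by linarith) hj1 hj2
    have hj : j ∈ Finset.Icc 1 N := Finset.mem_Icc.2 ⟨hj1, hj2.trans (Nat.div_le_self N 2)⟩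
    have hle : x (j - 1) ≤ x j := by
      have : 0 ≤ 1 - τ := by linarith
      rw [← sub_nonneg, hba]; positivity
    exact abs_derivative_eval_sub_derivWithin_le_coarse hK hK0 hk hβ
      ((Nat.cast_nonneg k).trans (by linarith)) (by omega) hε hεN hτ hτ1 ha hb hba
      (hS.of_le (by exact_mod_cast (by omega : k + 1 ≤ k + 2))) (hE.differentiableOn (by simp)) hu
      (hSb (k + 1) (by omega)) (fun t ht => by simpa using hEb 0 (by omega) t ht)
      (fun t ht => by simpa using hEb 1 (by omega) t ht) (hdeg j hj) (hmom j hj) (hend j hj)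
      (by rcases hy with rfl | rfl
          · exact left_mem_Icc.2 hle
          · exact right_mem_Icc.2 hle)
  have hi' := Finset.mem_Icc.1 hi
  refine (sq_le_of_abs_le_mul_add (c := c) (k := k) (σ := σ) hNR hε ?_).trans ?_
  · split_ifs with hi0
    · subst hi0; exact helem 1 le_rfl (by omega) (x 0) (by simp)
    · have h1 := helem i (by omega) (by omega) (x i) (by simp)
      have h2 := helem (i + 1) (by omega) (by omega) (x i) (by simp)
      rw [abs_le] at *; constructor <;> linarith
  · have : 0 ≤ (N : ℝ) ^ (-((k : ℝ) + 1 / 2)) * ε ^ ((-3 : ℝ) / 2) * (N : ℝ) ^ (-σ) :=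
      by positivity
    have : 0 ≤ (N : ℝ) ^ (-(2 * (k : ℝ))) + ε ^ (-2 : ℝ) * (N : ℝ) ^ (-(2 * σ)) := by
      positivity
    nlinarith

/-- Bound for the averaged one-sided derivatives of the Gauss–Radau projection
error `η = P⁻u − u` at the coarse-region nodes of the Shishkin mesh:
`{η′(x_i)}² ≤ C (N^{−2k} + N^{−(k+1/2)} ε^{−3/2} N^{−σ} + ε^{−2} N^{−2σ})`
for `0 ≤ i ≤ N/2 − 1`, with `C` independent of `ε` and `N`. -/
theorem statement11 (k : ℕ) (hk : 1 ≤ k) (β σ Cd : ℝ)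
    (hβ : 0 < β) (hσ : (k : ℝ) + 1 ≤ σ) (hCd : 0 < Cd) :
    ∃ C > 0, ∀ (N : ℕ) (ε τ : ℝ) (x : ℕ → ℝ) (u S E : ℝ → ℝ)
      (Pu : ℕ → Polynomial ℝ),
      4 ≤ N → N % 2 = 0 →
      0 < ε → ε ≤ (N : ℝ)⁻¹ →
      τ = σ * ε / β * Real.log N → τ ≤ 1 / 2 →
      (∀ i ≤ N / 2, x i = 2 * (1 - τ) * i / N) →
      (∀ i, N / 2 < i → i ≤ N → x i = 1 - τ + 2 * τ * ((i : ℝ) - (N / 2 : ℕ)) / N) →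
      ContDiffOn ℝ (k + 2 : ℕ) S (Icc 0 1) →
      ContDiffOn ℝ (k + 2 : ℕ) E (Icc 0 1) →
      (∀ t ∈ Icc (0:ℝ) 1, u t = S t + E t) →
      (∀ m ≤ k + 2, ∀ t ∈ Icc (0:ℝ) 1,
        |iteratedDerivWithin m S (Icc 0 1) t| ≤ Cd) →
      (∀ m ≤ k + 2, ∀ t ∈ Icc (0:ℝ) 1,
        |iteratedDerivWithin m E (Icc 0 1) t| ≤
          Cd / ε ^ m * Real.exp (-β * (1 - t) / ε)) →
      (∀ i ∈ Finset.Icc 1 N, (Pu i).natDegree ≤ k) →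
      (∀ i ∈ Finset.Icc 1 N, ∀ q : Polynomial ℝ, q.natDegree ≤ k - 1 →
        (∫ t in (x (i - 1))..(x i), (Pu i).eval t * q.eval t)
          = ∫ t in (x (i - 1))..(x i), u t * q.eval t) →
      (∀ i ∈ Finset.Icc 1 N, (Pu i).eval (x i) = u (x i)) →
      ∀ i ∈ Finset.Icc 0 (N / 2 - 1),
        (if i = 0 then
            ((Pu 1).derivative).eval (x 0) - derivWithin u (Icc 0 1) (x 0)
          else
            (((Pu i).derivative).eval (x i) + ((Pu (i + 1)).derivative).eval (x i)) / 2
              - derivWithin u (Icc 0 1) (x i)) ^ 2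
        ≤ C * ((N : ℝ) ^ (-(2 * (k : ℝ)))
            + (N : ℝ) ^ (-((k : ℝ) + 1 / 2)) * ε ^ ((-3 : ℝ) / 2) * (N : ℝ) ^ (-σ)
            + ε ^ (-2 : ℝ) * (N : ℝ) ^ (-(2 * σ))) :=
  statement11_general k hk β σ Cd hβ hσ
end
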